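/- arXiv:2302.06653 — 4 statements merged into one kernel-verified Lean document; each statement's English description precedes it below -/
import Mathlib

section
/- Let (G,λ) be a temporal graph such that λ is injective, i.e., |λ⁻¹(α)| ≤ 1 for every timestep α. Then maxD(G,λ,s,z) = minC(G,λ,s,z) for every pair of distinct vertices s,z ∈ V(G). -/
/-- A (finite, loopless) multigraph: a vertex type, an edge type, and an
endpoints function assigning to each edge an unordered pair of distinct vertices. -/
structure Multigraph where
  V : Type
  E : Type
  fintypeV : Fintype V
  decEqV : DecidableEq V
  fintypeE : Fintype E
  decEqE : DecidableEq E
  ends : E → Sym2 V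
  loopless : ∀ e, ¬ (ends e).IsDiag

attribute [instance] Multigraph.fintypeV Multigraph.decEqV Multigraph.fintypeE Multigraph.decEqE

/-- A temporal `s,z`-path in the temporal graph `(G, lam)`: an alternating sequence of
pairwise distinct vertices and edges, starting at `s`, ending at `z`, whose edges appear
at non-decreasing timesteps. -/
structure TPath (G : Multigraph) (lam : G.E → ℕ) (s z : G.V) where
  verts : List G.V
  edges : List G.E
  len_eq : verts.length = edges.length + 1
  head_eq : verts.head? = some s
  last_eq : verts.getLast? = some z
  nodup : verts.Nodup
  ends_eq : ∀ (i : ℕ) (h : i < edges.length),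
      G.ends (edges.get ⟨i, h⟩) = s(verts.get ⟨i, by omega⟩, verts.get ⟨i + 1, by omega⟩)
  mono : List.Chain' (· ≤ ·) (edges.map lam)

/-- The set of timesteps at which a temporal path is active. -/
def TPath.times {G : Multigraph} {lam : G.E → ℕ} {s z : G.V} (P : TPath G lam s z) : Set ℕ :=
  {t | ∃ e ∈ P.edges, lam e = t}

/-- Two temporal `s,z`-paths are snapshot disjoint if they are not both active at any
common timestep. -/
def SnapDisjoint {G : Multigraph} {lam : G.E → ℕ} {s z : G.V} (P Q : TPath G lam s z) : Prop :=
  P.times ∩ Q.times = ∅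

/-- A set `S` of timesteps is a snapshot `s,z`-cut if every temporal `s,z`-path uses an
edge active at some timestep in `S`. -/
def IsSnapCut (G : Multigraph) (lam : G.E → ℕ) (s z : G.V) (S : Set ℕ) : Prop :=
  ∀ P : TPath G lam s z, ∃ e ∈ P.edges, lam e ∈ S

/-- `maxD G lam s z`: the maximum number of pairwise snapshot disjoint temporal `s,z`-paths. -/
noncomputable def maxD (G : Multigraph) (lam : G.E → ℕ) (s z : G.V) : ℕ :=
  sSup {k | ∃ f : Fin k → TPath G lam s z, ∀ i j, i ≠ j → SnapDisjoint (f i) (f j)}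

/-- `minC G lam s z`: the minimum size of a snapshot `s,z`-cut. -/
noncomputable def minC (G : Multigraph) (lam : G.E → ℕ) (s z : G.V) : ℕ :=
  sInf {h | ∃ S : Finset ℕ, S.card = h ∧ IsSnapCut G lam s z ↑S}

/-- A proper timefunction: each edge is active at a positive timestep, and no two parallel
edges are active at the same timestep. -/
def ProperTime (G : Multigraph) (lam : G.E → ℕ) : Prop :=
  (∀ e, 0 < lam e) ∧ ∀ e f, e ≠ f → G.ends e = G.ends f → lam e ≠ lam f

/-- `G` is Mengerian for time: for every proper timefunction and every pair of distinct
vertices, the maximum number of pairwise snapshot disjoint temporal `s,z`-paths equals the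
minimum size of a snapshot `s,z`-cut. -/
def Mengerian (G : Multigraph) : Prop :=
  ∀ lam : G.E → ℕ, ProperTime G lam → ∀ s z : G.V, s ≠ z →
    maxD G lam s z = minC G lam s z

/-- `H` is a subgraph of `G` (up to isomorphism): `H` embeds into `G`. -/
def IsSubgraph (H G : Multigraph) : Prop :=
  ∃ (fv : H.V → G.V) (fe : H.E → G.E),
    Function.Injective fv ∧ Function.Injective fe ∧
    ∀ e, G.ends (fe e) = (H.ends e).map fv

/-- The m-subdivision of the multiedge `xy` of `G`: delete all edges between `x` and `y`,
add a new vertex (`none`), and join it to each of `x` and `y` by as many parallel edges as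
there were between `x` and `y`. -/
def Multigraph.msubdiv (G : Multigraph) (x y : G.V) : Multigraph where
  V := Option G.V
  E := {e : G.E // G.ends e ≠ s(x, y)} ⊕ ({e : G.E // G.ends e = s(x, y)} × Bool)
  fintypeV := inferInstance
  decEqV := inferInstance
  fintypeE := inferInstance
  decEqE := inferInstance
  ends := fun t =>
    match t with
    | .inl e => (G.ends e.1).map some
    | .inr (_, true) => s(some x, (none : Option G.V))
    | .inr (_, false) => s((none : Option G.V), some y)
  loopless := by
    rintro (⟨e, he⟩ | ⟨e, b⟩)
    · simpa [Sym2.isDiag_map (Option.some_injective _)] using G.loopless e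
    · cases b <;> simp [Sym2.mk_isDiag_iff]

/-- Isomorphism of multigraphs. -/
def MIso (G H : Multigraph) : Prop :=
  ∃ (fv : G.V ≃ H.V) (fe : G.E ≃ H.E), ∀ e, H.ends (fe e) = (G.ends e).map fv

/-- `B` is obtained from `A` by m-subdividing one of its multiedges. -/
def SubdivStep (A B : Multigraph) : Prop :=
  ∃ x y : A.V, (∃ e, A.ends e = s(x, y)) ∧ MIso (A.msubdiv x y) B

/-- `H` is an m-topological minor of `G`: some subgraph of `G` can be obtained from `H` by
a sequence of m-subdivisions. -/
def IsMTopMinor (H G : Multigraph) : Prop :=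
  ∃ K, Relation.ReflTransGen SubdivStep H K ∧ IsSubgraph K G

/-- The multigraph obtained from `G` by keeping only the edges satisfying `P`. -/
def Multigraph.restrictE (G : Multigraph) (P : G.E → Prop) [DecidablePred P] : Multigraph where
  V := G.V
  E := {e : G.E // P e}
  fintypeV := G.fintypeV
  decEqV := G.decEqV
  fintypeE := inferInstance
  decEqE := inferInstance
  ends := fun e => G.ends e.1
  loopless := fun e => G.loopless e.1

/-- The underlying simple graph of a multigraph. -/
def Multigraph.simple (G : Multigraph) : SimpleGraph G.V where
  Adj u v := ∃ e, G.ends e = s(u, v)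
  symm := by
    constructor
    rintro u v ⟨e, he⟩
    exact ⟨e, by rw [he, Sym2.eq_swap]⟩
  loopless := by
    constructor
    rintro u ⟨e, he⟩
    exact G.loopless e (by rw [he]; exact Sym2.mk_isDiag_iff.2 rfl)


/-! ### Auxiliary development for stmt5 -/

/-- Bundled data for the proof of `stmt5`: an enumeration of the edges of `G`
in increasing order of `lam`, together with chosen endpoints. -/
structure MSetup (G : Multigraph) where
  lam : G.E → ℕ
  s : G.V
  z : G.V
  hsz : s ≠ z
  hinj : Function.Injective lam
  m : ℕ
  edge : Fin m → G.E
  uu : Fin m → G.V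
  vv : Fin m → G.V
  hends : ∀ j, G.ends (edge j) = s(uu j, vv j)
  hedge_bij : Function.Bijective edge
  hmono : ∀ i j : Fin m, i < j ↔ lam (edge i) < lam (edge j)

namespace MSetup

variable {G : Multigraph} (S : MSetup G)

lemma huv (j : Fin S.m) : S.uu j ≠ S.vv j := by
  intro h
  exact G.loopless (S.edge j) (by rw [S.hends j, ← h]; exact Sym2.mk_isDiag_iff.2 rfl)

lemma edge_inj : Function.Injective S.edge := S.hedge_bij.1

lemma lamedge_inj : Function.Injective (fun j => S.lam (S.edge j)) :=
  S.hinj.comp S.edge_inj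

/-- Net flow contribution of one unit along level `j` in direction `uu → vv`,
as seen at vertex `v`. -/
def dvv (j : Fin S.m) (v : G.V) : ℤ :=
  (if v = S.vv j then 1 else 0) - (if v = S.uu j then 1 else 0)

/-- `hgt k y v i` : the number of flow units sitting at vertex `v` just after
level `i`, for the flow `y` with `k` units injected at `s`. -/
def hgt (k : ℕ) (y : Fin S.m → ℤ) (v : G.V) (i : ℕ) : ℤ :=
  (if v = S.s then (k : ℤ) else 0) +
    ∑ j ∈ Finset.univ.filter (fun j : Fin S.m => (j : ℕ) < i), y j * S.dvv j v

lemma hgt_zero (k : ℕ) (y : Fin S.m → ℤ) (v : G.V) :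
    S.hgt k y v 0 = if v = S.s then (k : ℤ) else 0 := by
  simp [hgt]

lemma hgt_succ (k : ℕ) (y : Fin S.m → ℤ) (v : G.V) (i : ℕ) :
    S.hgt k y v (i + 1) =
      S.hgt k y v i + (if h : i < S.m then y ⟨i, h⟩ * S.dvv ⟨i, h⟩ v else 0) := by
  unfold hgt
  by_cases h : i < S.m
  · have : Finset.univ.filter (fun j : Fin S.m => (j : ℕ) < i + 1) =
        insert ⟨i, h⟩ (Finset.univ.filter (fun j : Fin S.m => (j : ℕ) < i)) := by
      ext j
      simp only [Finset.mem_filter, Finset.mem_univ, true_and, Finset.mem_insert]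
      constructor
      · intro hj
        rcases Nat.lt_succ_iff_lt_or_eq.mp hj with hj | hj
        · exact Or.inr hj
        · exact Or.inl (Fin.ext hj)
      · rintro (rfl | hj)
        · exact Nat.lt_succ_self i
        · omega
    rw [this, Finset.sum_insert (by simp)]
    simp [h]
    ring
  · have : Finset.univ.filter (fun j : Fin S.m => (j : ℕ) < i + 1) =
        Finset.univ.filter (fun j : Fin S.m => (j : ℕ) < i) := by
      ext j
      have := j.isLt
      simp only [Finset.mem_filter, Finset.mem_univ, true_and]
      omega
    rw [this]
    simp [h]

lemma hgt_succ_src (k : ℕ) (y : Fin S.m → ℤ) (v : G.V) (i : ℕ) :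
    S.hgt (k + 1) y v i = S.hgt k y v i + (if v = S.s then 1 else 0) := by
  unfold hgt
  split_ifs <;> push_cast <;> ring

lemma hgt_update (k : ℕ) (y : Fin S.m → ℤ) (j : Fin S.m) (d : ℤ) (v : G.V) (i : ℕ) :
    S.hgt k (Function.update y j (y j + d)) v i =
      S.hgt k y v i + (if (j : ℕ) < i then d * S.dvv j v else 0) := by
  unfold hgt
  by_cases hj : (j : ℕ) < i
  · have hmem : j ∈ Finset.univ.filter (fun j' : Fin S.m => (j' : ℕ) < i) := by simp [hj]
    rw [← Finset.add_sum_erase _ _ hmem, ← Finset.add_sum_erase _ _ hmem]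
    have : ∑ j' ∈ (Finset.univ.filter (fun j' : Fin S.m => (j' : ℕ) < i)).erase j,
        Function.update y j (y j + d) j' * S.dvv j' v =
        ∑ j' ∈ (Finset.univ.filter (fun j' : Fin S.m => (j' : ℕ) < i)).erase j,
        y j' * S.dvv j' v := by
      apply Finset.sum_congr rfl
      intro j' hj'
      rw [Function.update_of_ne (Finset.ne_of_mem_erase hj')]
    rw [this, Function.update_self]
    simp [hj]
    ring
  · have : ∑ j' ∈ Finset.univ.filter (fun j' : Fin S.m => (j' : ℕ) < i),
        Function.update y j (y j + d) j' * S.dvv j' v =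
        ∑ j' ∈ Finset.univ.filter (fun j' : Fin S.m => (j' : ℕ) < i),
        y j' * S.dvv j' v := by
      apply Finset.sum_congr rfl
      intro j' hj'
      have : j' ≠ j := by
        rintro rfl
        simp at hj'
        omega
      rw [Function.update_of_ne this]
    rw [this]
    simp [hj]

/-- Flow of value `k` from `s` to `z`. -/
def IsFlow (k : ℕ) (y : Fin S.m → ℤ) : Prop :=
  (∀ j, y j = 1 ∨ y j = 0 ∨ y j = -1) ∧
    (∀ v i, i ≤ S.m → 0 ≤ S.hgt k y v i) ∧
    (∀ v, S.hgt k y v S.m = if v = S.z then (k : ℤ) else 0)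

lemma isFlow_zero : S.IsFlow 0 (fun _ => 0) := by
  refine ⟨fun j => Or.inr (Or.inl rfl), ?_, ?_⟩ <;> simp [hgt]

end MSetup
/-- Temporal walk (with respect to an `MSetup`): from `a` to `S.z`, where `vs`
is the list of visited vertices and `es` the list of traversed levels. -/
inductive MWk {G : Multigraph} (S : MSetup G) : G.V → List G.V → List (Fin S.m) → Prop
  | nil : MWk S S.z [S.z] []
  | cons (a b : G.V) (j : Fin S.m) (vs : List G.V) (es : List (Fin S.m))
      (hj : G.ends (S.edge j) = s(a, b)) (h : MWk S b vs es) : MWk S a (a :: vs) (j :: es)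

variable {G : Multigraph} {S : MSetup G}

lemma MWk.length {a vs es} (h : MWk S a vs es) : vs.length = es.length + 1 := by
  induction h with
  | nil => simp
  | cons a b j vs es hj h ih => simp [ih]

lemma MWk.ne_nil {a vs es} (h : MWk S a vs es) : vs ≠ [] := by
  cases h <;> simp

lemma MWk.head {a vs es} (h : MWk S a vs es) : vs.head? = some a := by
  cases h <;> simp

lemma MWk.last {a vs es} (h : MWk S a vs es) : vs.getLast? = some S.z := by
  induction h with
  | nil => simp
  | cons a b j vs es hj h ih =>
      cases vs with
      | nil => exact absurd rfl h.ne_nil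
      | cons c t => rw [List.getLast?_cons_cons]; exact ih

lemma MWk.get_zero {a vs es} (h : MWk S a vs es) :
    ∀ hh : 0 < vs.length, vs.get ⟨0, hh⟩ = a := by
  cases h <;> intro hh <;> rfl

lemma MWk.get {a vs es} (h : MWk S a vs es) :
    ∀ i (h1 : i < es.length) (h2 : i < vs.length) (h3 : i + 1 < vs.length),
      G.ends (S.edge (es.get ⟨i, h1⟩)) = s(vs.get ⟨i, h2⟩, vs.get ⟨i + 1, h3⟩) := by
  induction h with
  | nil => intro i h1; simp at h1
  | cons a b j vs es hj h ih =>
      intro i h1 h2 h3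
      cases i with
      | zero =>
          have hb := h.get_zero (by have := h.length; omega)
          simp only [List.get]
          rw [hb]
          exact hj
      | succ i' =>
          exact ih i' (by simp at h1 ⊢; omega) (by simp at h2 ⊢; omega)
            (by simp at h3 ⊢; omega)

lemma MWk.drop {a vs es} (h : MWk S a vs es) :
    ∀ k (hk : k < vs.length), MWk S (vs.get ⟨k, hk⟩) (vs.drop k) (es.drop k) := by
  induction h with
  | nil =>
      intro k hk
      simp at hk
      subst hk
      simpa using MWk.nil
  | cons a b j vs es hj h ih =>
      intro k hk
      cases k with
      | zero => simpa using MWk.cons a b j vs es hj h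
      | succ k' =>
          simpa using ih k' (by simpa using hk)
lemma MWk.shortcut : ∀ (N : ℕ) {a : G.V} {vs es}, vs.length ≤ N → MWk S a vs es →
    es.Pairwise (· < ·) →
    ∃ vs' es', MWk S a vs' es' ∧ es'.Pairwise (· < ·) ∧ vs'.Nodup ∧
      (∀ w ∈ vs', w ∈ vs) ∧ (∀ j ∈ es', j ∈ es) := by
  intro N
  induction N with
  | zero =>
      intro a vs es hN h _
      have := h.ne_nil
      cases vs
      · exact absurd rfl this
      · simp at hN
  | succ N ih =>
      intro a vs es hN h hp
      cases h with
      | nil =>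
          exact ⟨[S.z], [], MWk.nil, by simp, by simp, by simp, by simp⟩
      | cons a b j vs1 es1 hj h =>
          by_cases ha : a ∈ vs1
          · obtain ⟨k, hk⟩ := List.mem_iff_get.mp ha
            have hw := h.drop k.val k.isLt
            rw [hk] at hw
            have hlen : (vs1.drop k.val).length ≤ N := by
              have : vs1.length ≤ N := by simpa using hN
              simp
              omega
            have hp1 : (es1.drop k.val).Pairwise (· < ·) :=
              ((List.pairwise_cons.mp hp).2).sublist (List.drop_sublist _ _)
            obtain ⟨vs', es', w1, w2, w3, w4, w5⟩ := ih hlen hw hp1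
            refine ⟨vs', es', w1, w2, w3, ?_, ?_⟩
            · intro w hww
              exact List.mem_cons_of_mem _ (List.drop_subset _ _ (w4 w hww))
            · intro f hf
              exact List.mem_cons_of_mem _ (List.drop_subset _ _ (w5 f hf))
          · have hlen : vs1.length ≤ N := by simpa using hN
            obtain ⟨vs', es', w1, w2, w3, w4, w5⟩ :=
              ih hlen h ((List.pairwise_cons.mp hp).2)
            refine ⟨a :: vs', j :: es', MWk.cons a b j vs' es' hj w1, ?_, ?_, ?_, ?_⟩
            · refine List.pairwise_cons.mpr ⟨?_, w2⟩
              intro f hf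
              exact (List.pairwise_cons.mp hp).1 f (w5 f hf)
            · refine List.nodup_cons.mpr ⟨?_, w3⟩
              intro hav
              exact ha (w4 a hav)
            · intro w hw
              rcases List.mem_cons.mp hw with rfl | hw
              · exact List.mem_cons_self
              · exact List.mem_cons_of_mem _ (w4 w hw)
            · intro f hf
              rcases List.mem_cons.mp hf with rfl | hf
              · exact List.mem_cons_self
              · exact List.mem_cons_of_mem _ (w5 f hf)

/-- Build a temporal path from a nodup temporal walk. -/
lemma MWk.toTPath {vs es} (h : MWk S S.s vs es) (hp : es.Pairwise (· < ·))
    (hnd : vs.Nodup) :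
    ∃ P : TPath G S.lam S.s S.z, P.edges = es.map S.edge ∧ P.verts = vs := by
  have hlam : (es.map (fun j => S.lam (S.edge j))).Pairwise (· < ·) := by
    refine List.Pairwise.map _ ?_ hp
    intro a b hab
    exact (S.hmono a b).mp hab
  refine ⟨⟨vs, es.map S.edge, ?_, h.head, h.last, hnd, ?_, ?_⟩, rfl, rfl⟩
  · simpa using h.length
  · intro i hi
    have hi' : i < es.length := by simpa using hi
    have := h.get i hi' (by have := h.length; omega) (by have := h.length; omega)
    calc G.ends ((es.map S.edge).get ⟨i, hi⟩)
        = G.ends (S.edge (es.get ⟨i, hi'⟩)) := by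
          congr 1
          simp [List.get_eq_getElem]
      _ = _ := this
  · have : (es.map S.edge).map S.lam = es.map (fun j => S.lam (S.edge j)) := by
      simp [List.map_map]
    rw [this]
    exact List.isChain_iff_pairwise.mpr (hlam.imp le_of_lt)

/-- Convert vertex/edge lists satisfying the `TPath`-style conditions into a walk. -/
lemma listToMWk : ∀ (es : List (Fin S.m)) (vs : List G.V) (a : G.V),
    vs.length = es.length + 1 → vs.head? = some a → vs.getLast? = some S.z →
    (∀ i (h1 : i < es.length) (h2 : i < vs.length) (h3 : i + 1 < vs.length),
      G.ends (S.edge (es.get ⟨i, h1⟩)) = s(vs.get ⟨i, h2⟩, vs.get ⟨i + 1, h3⟩)) →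
    MWk S a vs es := by
  intro es
  induction es with
  | nil =>
      intro vs a hlen hhead hlast _
      match vs, hlen with
      | [w], _ =>
          simp at hhead hlast
          subst hhead; subst hlast
          exact MWk.nil
  | cons j es' ih =>
      intro vs a hlen hhead hlast hget
      match vs, hlen with
      | w :: c :: t, hlen =>
          simp at hhead
          subst hhead
          have h0 := hget 0 (by simp) (by simp) (by simp)
          have hrec : MWk S c (c :: t) es' := by
            refine ih (c :: t) c ?_ rfl ?_ ?_
            · simpa using hlen
            · rw [← hlast]; rfl
            · intro i h1 h2 h3
              exact hget (i+1) (by simpa using h1) (by simp at h2 ⊢; omega)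
                (by simp at h3 ⊢; omega)
          exact MWk.cons _ c j (c :: t) es' (by simpa using h0) hrec
/-- Convert a temporal path into a temporal walk on levels. -/
lemma tpathToMWk (P : TPath G S.lam S.s S.z) :
    ∃ es : List (Fin S.m), MWk S S.s P.verts es ∧ es.Pairwise (· < ·) ∧
      es.map S.edge = P.edges := by
  classical
  set eqv := Equiv.ofBijective S.edge S.hedge_bij with heqv
  have hedge_eqv : ∀ j, S.edge j = eqv j := fun j => rfl
  set es := P.edges.map ⇑eqv.symm with hes
  have hmaplen : es.length = P.edges.length := by simp [hes]
  have hedge_get : ∀ i (h1 : i < es.length),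
      S.edge (es.get ⟨i, h1⟩) = P.edges.get ⟨i, by omega⟩ := by
    intro i h1
    simp only [hes, List.get_eq_getElem, List.getElem_map, hedge_eqv,
      Equiv.apply_symm_apply]
  -- strict monotonicity of lam along the path
  have hadj : ∀ i (h : i + 1 < P.edges.length),
      S.lam (P.edges.get ⟨i, by omega⟩) < S.lam (P.edges.get ⟨i + 1, h⟩) := by
    intro i h
    have hle : S.lam (P.edges.get ⟨i, by omega⟩) ≤ S.lam (P.edges.get ⟨i + 1, h⟩) := by
      have := List.isChain_iff_getElem.mp P.mono i (by simp only [List.length_map]; omega)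
      simpa [List.get_eq_getElem] using this
    rcases lt_or_eq_of_le hle with hlt | heq
    · exact hlt
    · exfalso
      have hee : P.edges.get ⟨i, by omega⟩ = P.edges.get ⟨i + 1, h⟩ := S.hinj heq
      have hv1 := P.ends_eq i (by omega)
      have hv2 := P.ends_eq (i + 1) h
      rw [hee] at hv1
      rw [hv1] at hv2
      have hlen := P.len_eq
      rw [Sym2.eq_iff] at hv2
      have hnd := P.nodup
      rcases hv2 with ⟨h1, _⟩ | ⟨h1, _⟩
      · have : (⟨i, by omega⟩ : Fin P.verts.length) = ⟨i + 1, by omega⟩ :=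
          (List.Nodup.get_inj_iff hnd).mp h1
        simp at this
      · have : (⟨i, by omega⟩ : Fin P.verts.length) = ⟨i + 2, by omega⟩ :=
          (List.Nodup.get_inj_iff hnd).mp h1
        simp at this
  have hplam : (P.edges.map S.lam).Pairwise (· < ·) := by
    refine List.isChain_iff_pairwise.mp (List.isChain_iff_getElem.mpr ?_)
    intro i h
    have h' : i + 1 < P.edges.length := by simp only [List.length_map] at h; omega
    have := hadj i h'
    simpa [List.get_eq_getElem] using this
  have hpes : es.Pairwise (· < ·) := by
    refine List.pairwise_iff_get.mpr ?_
    intro i j hij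
    have hlam : S.lam (S.edge (es.get i)) < S.lam (S.edge (es.get j)) := by
      rw [hedge_get i.val i.isLt, hedge_get j.val j.isLt]
      have := List.pairwise_iff_get.mp hplam
        ⟨i.val, by have h1 := i.isLt; have h2 := hmaplen; simp only [List.length_map]; omega⟩
        ⟨j.val, by have h1 := j.isLt; have h2 := hmaplen; simp only [List.length_map]; omega⟩
        (by simp only [Fin.mk_lt_mk]; exact hij)
      simpa [List.get_eq_getElem] using this
    exact (S.hmono _ _).mpr hlam
  refine ⟨es, ?_, hpes, ?_⟩
  · refine listToMWk es P.verts S.s ?_ P.head_eq P.last_eq ?_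
    · rw [hmaplen]; exact P.len_eq
    · intro i h1 h2 h3
      rw [hedge_get i h1]
      exact P.ends_eq i (by omega)
  · rw [hes, List.map_map]
    have : ⇑eqv ∘ ⇑eqv.symm = id := by
      funext e
      simp
    calc P.edges.map (S.edge ∘ ⇑eqv.symm) = P.edges.map (⇑eqv ∘ ⇑eqv.symm) := rfl
      _ = P.edges.map id := by rw [this]
      _ = P.edges := List.map_id _
namespace MSetup

/-- One greedy step of the walk-extraction scanner. -/
def mv (S : MSetup G) (x : Fin S.m → ℤ) (j : Fin S.m) (w : G.V) : G.V :=
  if x j = 1 ∧ w = S.uu j then S.vv j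
  else if x j = -1 ∧ w = S.vv j then S.uu j
  else w

/-- The scanner: position after level `i` when greedily following the flow `x`. -/
def scan (S : MSetup G) (x : Fin S.m → ℤ) : ℕ → G.V
  | 0 => S.s
  | i + 1 => if h : i < S.m then S.mv x ⟨i, h⟩ (S.scan x i) else S.scan x i

lemma scan_zero (S : MSetup G) (x : Fin S.m → ℤ) : S.scan x 0 = S.s := rfl

lemma scan_succ (S : MSetup G) (x : Fin S.m → ℤ) (i : ℕ) (h : i < S.m) :
    S.scan x (i + 1) = S.mv x ⟨i, h⟩ (S.scan x i) := by
  simp [scan, h]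

lemma moved_cases (S : MSetup G) (x : Fin S.m → ℤ) (i : ℕ) (hi : i < S.m)
    (hm : S.scan x (i + 1) ≠ S.scan x i) :
    (x ⟨i, hi⟩ = 1 ∧ S.scan x i = S.uu ⟨i, hi⟩ ∧ S.scan x (i + 1) = S.vv ⟨i, hi⟩) ∨
    (x ⟨i, hi⟩ = -1 ∧ S.scan x i = S.vv ⟨i, hi⟩ ∧ S.scan x (i + 1) = S.uu ⟨i, hi⟩) := by
  have hs := S.scan_succ x i hi
  unfold mv at hs
  split_ifs at hs with h1 h2
  · exact Or.inl ⟨h1.1, h1.2, hs⟩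
  · exact Or.inr ⟨h2.1, h2.2, hs⟩
  · exact absurd hs hm

end MSetup

section Scanner

variable {k : ℕ} {x : Fin S.m → ℤ}

/-- The scanner always sits on a vertex holding at least one unit of flow. -/
lemma scan_occupied (hf : S.IsFlow (k + 1) x) :
    ∀ i, i ≤ S.m → 1 ≤ S.hgt (k + 1) x (S.scan x i) i := by
  intro i
  induction i with
  | zero =>
      intro _
      rw [MSetup.scan_zero, S.hgt_zero]
      simp
  | succ i ih =>
      intro hi
      have hi' : i < S.m := hi
      have hstep := S.scan_succ x i hi'
      have hsucc : ∀ v, S.hgt (k+1) x v (i+1) =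
          S.hgt (k+1) x v i + x ⟨i, hi'⟩ * S.dvv ⟨i, hi'⟩ v := by
        intro v
        rw [S.hgt_succ]
        simp [hi']
      have hih := ih (le_of_lt hi)
      have hnn : ∀ v, 0 ≤ S.hgt (k+1) x v i := fun v => hf.2.1 v i (le_of_lt hi)
      rw [hstep]
      unfold MSetup.mv
      split_ifs with h1 h2
      · rw [hsucc]
        have hd : S.dvv ⟨i, hi'⟩ (S.vv ⟨i, hi'⟩) = 1 := by
          unfold MSetup.dvv
          simp [Ne.symm (S.huv ⟨i, hi'⟩)]
        rw [hd, h1.1]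
        have := hnn (S.vv ⟨i, hi'⟩)
        omega
      · rw [hsucc]
        have hd : S.dvv ⟨i, hi'⟩ (S.uu ⟨i, hi'⟩) = -1 := by
          unfold MSetup.dvv
          simp [S.huv ⟨i, hi'⟩]
        rw [hd, h2.1]
        have := hnn (S.uu ⟨i, hi'⟩)
        omega
      · rw [hsucc]
        have hterm : 0 ≤ x ⟨i, hi'⟩ * S.dvv ⟨i, hi'⟩ (S.scan x i) := by
          rcases hf.1 ⟨i, hi'⟩ with hx | hx | hx
          · have hne : ¬ S.scan x i = S.uu ⟨i, hi'⟩ := fun hc => h1 ⟨hx, hc⟩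
            unfold MSetup.dvv
            rw [hx]
            split_ifs <;> simp_all
          · simp [hx]
          · have hne : ¬ S.scan x i = S.vv ⟨i, hi'⟩ := fun hc => h2 ⟨hx, hc⟩
            unfold MSetup.dvv
            rw [hx]
            split_ifs <;> simp_all
        omega

/-- Residual flow after removing the scanner walk. -/
noncomputable def resid (S : MSetup G) (x : Fin S.m → ℤ) : Fin S.m → ℤ :=
  fun j => if S.scan x ((j : ℕ) + 1) ≠ S.scan x (j : ℕ) then 0 else x j

lemma resid_hgt (hf : S.IsFlow (k + 1) x) :
    ∀ v i, i ≤ S.m →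
      S.hgt k (resid S x) v i =
        S.hgt (k + 1) x v i - (if v = S.scan x i then 1 else 0) := by
  intro v i
  induction i with
  | zero =>
      intro _
      rw [S.hgt_zero, S.hgt_zero, MSetup.scan_zero]
      push_cast
      split_ifs <;> ring
  | succ i ih =>
      intro hi
      have hi' : i < S.m := hi
      have hx' : ∀ y : Fin S.m → ℤ, ∀ kk, S.hgt kk y v (i+1) =
          S.hgt kk y v i + y ⟨i, hi'⟩ * S.dvv ⟨i, hi'⟩ v := by
        intro y kk
        rw [S.hgt_succ]
        simp [hi']
      rw [hx', hx', ih (le_of_lt hi)]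
      by_cases hm : S.scan x (i + 1) ≠ S.scan x i
      · have hrj : resid S x ⟨i, hi'⟩ = 0 := by
          simp only [resid]
          rw [if_pos (by exact hm)]
        rcases S.moved_cases x i hi' hm with ⟨hx1, hc, hc'⟩ | ⟨hx1, hc, hc'⟩
        · rw [hrj, hx1, hc, hc']
          unfold MSetup.dvv
          split_ifs <;> simp_all <;> ring
        · rw [hrj, hx1, hc, hc']
          unfold MSetup.dvv
          split_ifs <;> simp_all <;> ring
      · push_neg at hm
        have hrj : resid S x ⟨i, hi'⟩ = x ⟨i, hi'⟩ := by
          simp only [resid]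
          rw [if_neg (not_ne_iff.mpr hm)]
        rw [hrj, hm]
        ring

lemma scan_last (hf : S.IsFlow (k + 1) x) : S.scan x S.m = S.z := by
  have h1 := scan_occupied hf S.m le_rfl
  have h2 := hf.2.2 (S.scan x S.m)
  rw [h2] at h1
  by_contra hne
  rw [if_neg hne] at h1
  omega

lemma resid_isFlow (hf : S.IsFlow (k + 1) x) : S.IsFlow k (resid S x) := by
  refine ⟨?_, ?_, ?_⟩
  · intro j
    simp only [resid]
    split_ifs with h
    · exact Or.inr (Or.inl rfl)
    · exact hf.1 j
  · intro v i hi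
    rw [resid_hgt hf v i hi]
    split_ifs with h
    · subst h
      have := scan_occupied hf i hi
      omega
    · have := hf.2.1 v i hi
      omega
  · intro v
    rw [resid_hgt hf v S.m le_rfl, hf.2.2 v, scan_last hf]
    split_ifs with h <;> push_cast <;> ring

/-- The scanner traces out a temporal walk whose levels are exactly the moved levels. -/
lemma scan_walk (hf : S.IsFlow (k + 1) x) :
    ∀ d i, i + d = S.m →
      ∃ vs es, MWk S (S.scan x i) vs es ∧ es.Pairwise (· < ·) ∧
        (∀ j : Fin S.m, j ∈ es ↔ (i ≤ (j : ℕ) ∧ S.scan x ((j : ℕ) + 1) ≠ S.scan x (j : ℕ))) := by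
  intro d
  induction d with
  | zero =>
      intro i hi
      have : i = S.m := by omega
      subst this
      rw [scan_last hf]
      refine ⟨[S.z], [], MWk.nil, by simp, ?_⟩
      intro j
      simp only [List.not_mem_nil, false_iff, not_and]
      intro hj
      exact absurd hj (by have := j.isLt; omega)
  | succ d ih =>
      intro i hi
      have hi' : i < S.m := by omega
      obtain ⟨vs, es, hw, hp, hmem⟩ := ih (i + 1) (by omega)
      by_cases hm : S.scan x (i + 1) ≠ S.scan x i
      · have hends : G.ends (S.edge ⟨i, hi'⟩) = s(S.scan x i, S.scan x (i + 1)) := by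
          rcases S.moved_cases x i hi' hm with ⟨_, hc, hc'⟩ | ⟨_, hc, hc'⟩
          · rw [S.hends ⟨i, hi'⟩, hc, hc']
          · rw [S.hends ⟨i, hi'⟩, hc, hc']
            exact Sym2.eq_swap
        refine ⟨S.scan x i :: vs, ⟨i, hi'⟩ :: es,
          MWk.cons _ _ _ vs es hends hw, ?_, ?_⟩
        · refine List.pairwise_cons.mpr ⟨?_, hp⟩
          intro f hf'
          have := ((hmem f).mp hf').1
          simp only [Fin.lt_def]
          omega
        · intro j
          simp only [List.mem_cons]
          constructor
          · rintro (rfl | hj)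
            · exact ⟨le_refl i, hm⟩
            · obtain ⟨h1, h2⟩ := (hmem j).mp hj
              exact ⟨by omega, h2⟩
          · rintro ⟨hij, hmv⟩
            by_cases hji : (j : ℕ) = i
            · exact Or.inl (Fin.ext (by simpa using hji))
            · exact Or.inr ((hmem j).mpr ⟨by omega, hmv⟩)
      · push_neg at hm
        refine ⟨vs, es, by rwa [hm] at hw, hp, ?_⟩
        intro j
        rw [hmem j]
        constructor
        · rintro ⟨h1, h2⟩
          exact ⟨by omega, h2⟩
        · rintro ⟨h1, h2⟩
          refine ⟨?_, h2⟩
          by_cases hji : (j : ℕ) = i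
          · exfalso
            apply h2
            rw [hji, hm]
          · omega

end Scanner
section Extraction

lemma flow_to_walks : ∀ (k : ℕ) (x : Fin S.m → ℤ), S.IsFlow k x →
    ∃ F : Fin k → List G.V × List (Fin S.m),
      (∀ t, MWk S S.s (F t).1 (F t).2 ∧ (F t).2.Pairwise (· < ·) ∧
        ∀ j ∈ (F t).2, x j ≠ 0) ∧
      (∀ t t', t ≠ t' → ∀ j, j ∈ (F t).2 → j ∉ (F t').2) := by
  intro k
  induction k with
  | zero =>
      intro x hf
      exact ⟨Fin.elim0, fun t => t.elim0, fun t => t.elim0⟩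
  | succ k ih =>
      intro x hf
      obtain ⟨vs0, es0, hw0, hp0, hmem0⟩ := scan_walk hf S.m 0 (by omega)
      rw [MSetup.scan_zero] at hw0
      obtain ⟨F', h1', h2'⟩ := ih (resid S x) (resid_isFlow hf)
      have hmoved_ne : ∀ j : Fin S.m, S.scan x ((j : ℕ) + 1) ≠ S.scan x (j : ℕ) →
          x j ≠ 0 := by
        intro j hj
        rcases S.moved_cases x (j : ℕ) j.isLt hj with ⟨hx1, _⟩ | ⟨hx1, _⟩ <;>
          · rw [show (⟨(j : ℕ), j.isLt⟩ : Fin S.m) = j from Fin.ext rfl] at hx1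
            omega
      have hresid_mem : ∀ t j, j ∈ (F' t).2 →
          (¬ S.scan x ((j : ℕ) + 1) ≠ S.scan x (j : ℕ)) ∧ x j ≠ 0 := by
        intro t j hj
        have hx' := (h1' t).2.2 j hj
        simp only [resid] at hx'
        split_ifs at hx' with h
        · exact absurd rfl hx'
        · exact ⟨h, hx'⟩
      refine ⟨Fin.cases (vs0, es0) F', ?_, ?_⟩
      · intro t
        induction t using Fin.cases with
        | zero =>
            refine ⟨hw0, hp0, ?_⟩
            intro j hj
            exact hmoved_ne j ((hmem0 j).mp hj).2
        | succ t =>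
            refine ⟨(h1' t).1, (h1' t).2.1, ?_⟩
            intro j hj
            exact (hresid_mem t j hj).2
      · intro t t' hne j
        induction t using Fin.cases with
        | zero =>
            induction t' using Fin.cases with
            | zero => exact absurd rfl hne
            | succ t' =>
                intro hj hj'
                exact (hresid_mem t' j hj').1 ((hmem0 j).mp hj).2
        | succ t =>
            induction t' using Fin.cases with
            | zero =>
                intro hj hj'
                exact (hresid_mem t j hj).1 ((hmem0 j).mp hj').2
            | succ t' =>
                exact h2' t t' (fun h => hne (by rw [h])) j

lemma flow_to_tpaths (k : ℕ) (x : Fin S.m → ℤ) (hf : S.IsFlow k x) :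
    ∃ f : Fin k → TPath G S.lam S.s S.z,
      ∀ t t', t ≠ t' → SnapDisjoint (f t) (f t') := by
  obtain ⟨F, h1, h2⟩ := flow_to_walks k x hf
  have hex : ∀ t, ∃ P : TPath G S.lam S.s S.z,
      ∀ e ∈ P.edges, ∃ j ∈ (F t).2, S.edge j = e := by
    intro t
    obtain ⟨hw, hp, _⟩ := h1 t
    obtain ⟨vs', es', hw', hp', hnd', _, hsub⟩ :=
      MWk.shortcut (F t).1.length le_rfl hw hp
    obtain ⟨P, hPe, _⟩ := hw'.toTPath hp' hnd'
    refine ⟨P, ?_⟩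
    intro e he
    rw [hPe] at he
    obtain ⟨j, hj, rfl⟩ := List.mem_map.mp he
    exact ⟨j, hsub j hj, rfl⟩
  choose f hfp using hex
  refine ⟨f, ?_⟩
  intro t t' hne
  rw [SnapDisjoint, Set.eq_empty_iff_forall_notMem]
  rintro τ ⟨⟨e, he, heτ⟩, ⟨e', he', heτ'⟩⟩
  have hee : e = e' := S.hinj (by rw [heτ, heτ'])
  obtain ⟨j, hj, hje⟩ := hfp t e he
  obtain ⟨j', hj', hje'⟩ := hfp t' e' he'
  have : j = j' := S.edge_inj (by rw [hje, hje', hee])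
  subst this
  exact h2 t t' hne j hj hj'

end Extraction
section NodupChain

variable {α : Type*} [DecidableEq α] {r : α → α → Prop}

lemma not_nodup_decomp : ∀ (l : List α), ¬ l.Nodup →
    ∃ (l1 : List α) (xx : α) (l2 l3 : List α), l = l1 ++ xx :: l2 ++ xx :: l3 := by
  intro l
  induction l with
  | nil => intro h; exact absurd List.nodup_nil h
  | cons c t ih =>
      intro h
      by_cases hc : c ∈ t
      · obtain ⟨t1, t2, rfl⟩ := List.append_of_mem hc
        exact ⟨[], c, t1, t2, by simp⟩
      · have : ¬ t.Nodup := fun hn => h (List.nodup_cons.mpr ⟨hc, hn⟩)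
        obtain ⟨l1, xx, l2, l3, rfl⟩ := ih this
        exact ⟨c :: l1, xx, l2, l3, by simp⟩

lemma exists_nodup_chain_aux {b : α} : ∀ (n : ℕ) (l : List α) (a : α), l.length ≤ n →
    List.Chain r a l → (a :: l).getLast? = some b →
    ∃ l', List.Chain r a l' ∧ (a :: l').getLast? = some b ∧ (a :: l').Nodup := by
  intro n
  induction n with
  | zero =>
      intro l a hl hc hb
      match l, hl with
      | [], _ => exact ⟨[], hc, hb, by simp⟩
  | succ n ih =>
      intro l a hl hc hb
      by_cases hnd : (a :: l).Nodup
      · exact ⟨l, hc, hb, hnd⟩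
      · obtain ⟨l1, xx, l2, l3, hdec⟩ := not_nodup_decomp _ hnd
        cases l1 with
        | nil =>
            simp only [List.nil_append] at hdec
            have hax : a = xx := by
              have := congrArg List.head? hdec
              simpa using this
            subst hax
            have hltail : l = l2 ++ a :: l3 := by
              have := congrArg List.tail hdec
              simpa using this
            subst hltail
            have hc3 : List.Chain r a l3 := (List.isChain_cons_split.mp hc).2
            have hb3 : (a :: l3).getLast? = some b := by
              rw [show (a :: (l2 ++ a :: l3)) = (a :: l2) ++ (a :: l3) by simp] at hb
              rwa [List.getLast?_append_of_ne_nil _ (by simp)] at hb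
            exact ih l3 a (by simp at hl; omega) hc3 hb3
        | cons c l1' =>
            have hca : a = c := by
              have := congrArg List.head? hdec
              simpa using this
            subst hca
            have hltail : l = l1' ++ xx :: l2 ++ xx :: l3 := by
              have := congrArg List.tail hdec
              simpa using this
            subst hltail
            have hc2 : List.Chain r a (l1' ++ xx :: (l2 ++ xx :: l3)) := by
              simpa using hc
            have hsplit1 : List.Chain r a (l1' ++ [xx]) ∧ List.Chain r xx (l2 ++ xx :: l3) :=
              List.isChain_cons_split.mp hc2
            have hsplit2 : List.Chain r xx (l2 ++ [xx]) ∧ List.Chain r xx l3 :=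
              List.isChain_cons_split.mp hsplit1.2
            have hc' : List.Chain r a (l1' ++ xx :: l3) :=
              List.isChain_cons_split.mpr ⟨hsplit1.1, hsplit2.2⟩
            have hb' : (a :: (l1' ++ xx :: l3)).getLast? = some b := by
              rw [show (a :: (l1' ++ xx :: l2 ++ xx :: l3))
                    = (a :: l1' ++ xx :: l2) ++ (xx :: l3) by simp] at hb
              rw [List.getLast?_append_of_ne_nil _ (by simp)] at hb
              rw [show (a :: (l1' ++ xx :: l3)) = (a :: l1') ++ (xx :: l3) by simp]
              rwa [List.getLast?_append_of_ne_nil _ (by simp)]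
            refine ih (l1' ++ xx :: l3) a ?_ hc' hb'
            simp at hl ⊢
            omega

lemma exists_nodup_chain {a b : α} (h : Relation.ReflTransGen r a b) :
    ∃ l, List.Chain r a l ∧ (a :: l).getLast? = some b ∧ (a :: l).Nodup := by
  obtain ⟨l, hc, hl⟩ := List.exists_isChain_cons_of_relationReflTransGen h
  refine exists_nodup_chain_aux l.length l a le_rfl hc ?_
  rw [List.getLast?_eq_getLast (l := a :: l) (by simp), hl]

end NodupChain
section Residual

/-- The residual relation of the flow `x` on the time-expanded graph. -/
def Res (S : MSetup G) (k : ℕ) (x : Fin S.m → ℤ) (p q : G.V × ℕ) : Prop :=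
  (q.1 = p.1 ∧ q.2 = p.2 + 1 ∧ q.2 ≤ S.m) ∨
  (q.1 = p.1 ∧ p.2 = q.2 + 1 ∧ p.2 ≤ S.m ∧ 1 ≤ S.hgt k x p.1 q.2) ∨
  (∃ j : Fin S.m, p.2 = (j : ℕ) ∧ q.2 = (j : ℕ) + 1 ∧
    ((p.1 = S.uu j ∧ q.1 = S.vv j ∧ x j ≤ 0) ∨ (p.1 = S.vv j ∧ q.1 = S.uu j ∧ 0 ≤ x j))) ∨
  (∃ j : Fin S.m, p.2 = (j : ℕ) + 1 ∧ q.2 = (j : ℕ) ∧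
    ((p.1 = S.vv j ∧ q.1 = S.uu j ∧ x j = 1) ∨ (p.1 = S.uu j ∧ q.1 = S.vv j ∧ x j = -1)))

variable {k : ℕ} {x : Fin S.m → ℤ}

lemma hgt_level (kk : ℕ) (y : Fin S.m → ℤ) (j : Fin S.m) (v : G.V) :
    S.hgt kk y v ((j : ℕ) + 1) = S.hgt kk y v (j : ℕ) + y j * S.dvv j v := by
  rw [S.hgt_succ]
  simp [j.isLt]

lemma conserv_uu (hf : S.IsFlow k x) (j : Fin S.m) (hx : x j = 1) :
    1 ≤ S.hgt k x (S.uu j) (j : ℕ) := by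
  have h1 := hgt_level k x j (S.uu j)
  have h2 : S.dvv j (S.uu j) = -1 := by
    unfold MSetup.dvv
    simp [S.huv j]
  have h3 := hf.2.1 (S.uu j) ((j : ℕ) + 1) (by have := j.isLt; omega)
  rw [h2, hx] at h1
  omega

lemma conserv_vv (hf : S.IsFlow k x) (j : Fin S.m) (hx : x j = -1) :
    1 ≤ S.hgt k x (S.vv j) (j : ℕ) := by
  have h1 := hgt_level k x j (S.vv j)
  have h2 : S.dvv j (S.vv j) = 1 := by
    unfold MSetup.dvv
    simp [Ne.symm (S.huv j)]
  have h3 := hf.2.1 (S.vv j) ((j : ℕ) + 1) (by have := j.isLt; omega)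
  rw [h2, hx] at h1
  omega

/-- Bookkeeping invariant for the flow updates along a residual path. -/
def YInv (S : MSetup G) (x : Fin S.m → ℤ) (vis : List (G.V × ℕ))
    (y : Fin S.m → ℤ) (j : Fin S.m) : Prop :=
  (y j = x j) ∨
  (y j = x j + 1 ∧ x j ≤ 0 ∧ (S.uu j, (j : ℕ)) ∈ vis) ∨
  (y j = x j - 1 ∧ 0 ≤ x j ∧ (S.vv j, (j : ℕ)) ∈ vis) ∨
  (y j = x j - 1 ∧ x j = 1 ∧ (S.vv j, (j : ℕ) + 1) ∈ vis) ∨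
  (y j = x j + 1 ∧ x j = -1 ∧ (S.uu j, (j : ℕ) + 1) ∈ vis) ∨
  (y j = x j ∧ x j = 0 ∧ (S.uu j, (j : ℕ)) ∈ vis ∧ (S.vv j, (j : ℕ)) ∈ vis) ∨
  (y j = x j - 2 ∧ x j = 1 ∧ (S.vv j, (j : ℕ)) ∈ vis ∧ (S.vv j, (j : ℕ) + 1) ∈ vis) ∨
  (y j = x j + 2 ∧ x j = -1 ∧ (S.uu j, (j : ℕ)) ∈ vis ∧ (S.uu j, (j : ℕ) + 1) ∈ vis)

lemma YInv.mono {vis vis' : List (G.V × ℕ)} {y : Fin S.m → ℤ} {j : Fin S.m}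
    (hsub : ∀ p ∈ vis, p ∈ vis') (h : YInv S x vis y j) : YInv S x vis' y j := by
  unfold YInv at h ⊢
  rcases h with h|h|h|h|h|h|h|h
  · exact Or.inl h
  · exact Or.inr (Or.inl ⟨h.1, h.2.1, hsub _ h.2.2⟩)
  · exact Or.inr (Or.inr (Or.inl ⟨h.1, h.2.1, hsub _ h.2.2⟩))
  · exact Or.inr (Or.inr (Or.inr (Or.inl ⟨h.1, h.2.1, hsub _ h.2.2⟩)))
  · exact Or.inr (Or.inr (Or.inr (Or.inr (Or.inl ⟨h.1, h.2.1, hsub _ h.2.2⟩))))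
  · exact Or.inr (Or.inr (Or.inr (Or.inr (Or.inr (Or.inl
      ⟨h.1, h.2.1, hsub _ h.2.2.1, hsub _ h.2.2.2⟩)))))
  · exact Or.inr (Or.inr (Or.inr (Or.inr (Or.inr (Or.inr (Or.inl
      ⟨h.1, h.2.1, hsub _ h.2.2.1, hsub _ h.2.2.2⟩))))))
  · exact Or.inr (Or.inr (Or.inr (Or.inr (Or.inr (Or.inr (Or.inr
      ⟨h.1, h.2.1, hsub _ h.2.2.1, hsub _ h.2.2.2⟩))))))

end Residual
section AugMain

variable {k : ℕ} {x : Fin S.m → ℤ}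

lemma aug_main (hf : S.IsFlow k x) :
    ∀ (rest : List (G.V × ℕ)) (cur : G.V × ℕ) (vis : List (G.V × ℕ))
      (y : Fin S.m → ℤ) (C : G.V → ℕ → ℤ),
      List.Chain (Res S k x) cur rest →
      (vis ++ cur :: rest).Nodup →
      cur.2 ≤ S.m →
      (cur :: rest).getLast? = some (S.z, S.m) →
      (∀ v i, i ≤ S.m → S.hgt (k+1) y v i =
        S.hgt k x v i + C v i + (if v = cur.1 ∧ cur.2 ≤ i then 1 else 0)) →
      (∀ v i, C v i = 0 ∨ (C v i = 1 ∧ (v,i) ∈ vis) ∨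
        (C v i = -1 ∧ 1 ≤ S.hgt k x v i ∧ ((v,i) ∈ vis ∨ (v,i) = cur))) →
      (∀ v i, C v i ≠ 0 → i < S.m) →
      (∀ j : Fin S.m, YInv S x vis y j) →
      ∃ y', S.IsFlow (k+1) y' := by
  intro rest
  induction rest with
  | nil =>
      intro cur vis y C _ _ _ hlast hI1 hI2 hI3 hI4
      have hcur : cur = (S.z, S.m) := by simpa using hlast
      refine ⟨y, ?_, ?_, ?_⟩
      · intro j
        have hx := hf.1 j
        have h4 := hI4 j
        unfold YInv at h4
        rcases h4 with h|h|h|h|h|h|h|h <;> omega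
      · intro v i hi
        have h1 := hI1 v i hi
        have hB := hf.2.1 v i hi
        rcases hI2 v i with h2 | h2 | h2 <;>
          · rw [h1]
            split_ifs <;> omega
      · intro v
        have h1 := hI1 v S.m le_rfl
        have hCm : C v S.m = 0 := by
          by_contra hC
          exact absurd (hI3 v S.m hC) (lt_irrefl _)
        have hB := hf.2.2 v
        rw [hB, hCm, hcur] at h1
        simp only at h1
        rw [h1]
        split_ifs with hvz h2 h2 <;> push_cast <;> simp_all <;> omega
  | cons n' rest' ih =>
      intro cur vis y C hchain hnd hcurm hlast hI1 hI2 hI3 hI4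
      obtain ⟨hres, hchain'⟩ := List.chain_cons.mp hchain
      -- bookkeeping facts
      have hnd' : ((vis ++ [cur]) ++ n' :: rest').Nodup := by
        rw [List.append_assoc]
        exact hnd
      have hlast' : (n' :: rest').getLast? = some (S.z, S.m) := by
        rw [← hlast, List.getLast?_cons_cons]
      have hcur_nvis : cur ∉ vis := by
        rcases List.nodup_append.mp hnd with ⟨_, _, hdisj⟩
        intro hc
        exact hdisj _ hc _ List.mem_cons_self rfl
      have hn'_nvis : n' ∉ vis := by
        rcases List.nodup_append.mp hnd with ⟨_, _, hdisj⟩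
        intro hc
        exact hdisj _ hc _ (List.mem_cons_of_mem _ List.mem_cons_self) rfl
      have hn'_ncur : n' ≠ cur := by
        rcases List.nodup_append.mp hnd with ⟨_, hnd2, _⟩
        rcases List.nodup_cons.mp hnd2 with ⟨hcc, _⟩
        intro hc
        rw [hc] at hcc
        exact hcc (List.mem_cons_self)
      have hsub : ∀ p ∈ vis, p ∈ vis ++ [cur] := fun p hp => List.mem_append_left _ hp
      have hcur_mem : cur ∈ vis ++ [cur] := List.mem_append_right _ (by simp)
      rcases hres with ⟨hq1, hq2, hq3⟩ | ⟨hq1, hq2, hq3, hq4⟩ |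
        ⟨j, hp2, hq2, hdir⟩ | ⟨j, hp2, hq2, hdir⟩
      ·
        refine ih n' (vis ++ [cur]) y
          (fun v i => C v i + (if v = cur.1 ∧ i = cur.2 then 1 else 0))
          hchain' hnd' hq3 hlast' ?_ ?_ ?_ ?_
        · intro v i hi
          rw [hI1 v i hi, hq1, hq2]
          by_cases hv : v = cur.1 <;>
            simp only [hv, eq_self_iff_true, true_and, false_and, if_true, if_false] <;>
            first
            | omega
            | (split_ifs <;> omega)
        · intro v i
          by_cases ht : v = cur.1 ∧ i = cur.2
          · have hvic : (v, i) = cur := by rw [ht.1, ht.2]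
            rw [if_pos ht]
            rcases hI2 v i with h2 | ⟨h2a, h2b⟩ | ⟨h2a, h2b, h2c⟩
            · refine Or.inr (Or.inl ⟨by omega, ?_⟩)
              rw [hvic]
              exact hcur_mem
            · exfalso
              rw [hvic] at h2b
              exact hcur_nvis h2b
            · exact Or.inl (by omega)
          · rw [if_neg ht, add_zero]
            rcases hI2 v i with h2 | ⟨h2a, h2b⟩ | ⟨h2a, h2b, h2c⟩
            · exact Or.inl h2
            · exact Or.inr (Or.inl ⟨h2a, hsub _ h2b⟩)
            · refine Or.inr (Or.inr ⟨h2a, h2b, Or.inl ?_⟩)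
              rcases h2c with h2c | h2c
              · exact hsub _ h2c
              · rw [h2c]
                exact hcur_mem
        · intro v i hC
          by_cases ht : v = cur.1 ∧ i = cur.2
          · rw [ht.2]
            omega
          · rw [if_neg ht, add_zero] at hC
            exact hI3 v i hC
        · intro j
          exact (hI4 j).mono hsub
      ·
        refine ih n' (vis ++ [cur]) y
          (fun v i => C v i + (if v = cur.1 ∧ i = n'.2 then -1 else 0))
          hchain' hnd' (by omega) hlast' ?_ ?_ ?_ ?_
        · intro v i hi
          rw [hI1 v i hi, hq1, hq2]
          by_cases hv : v = cur.1 <;>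
            simp only [hv, eq_self_iff_true, true_and, false_and, if_true, if_false] <;>
            first
            | omega
            | (split_ifs <;> omega)
        · intro v i
          by_cases ht : v = cur.1 ∧ i = n'.2
          · have hvic : (v, i) = n' := by rw [ht.1, ht.2, ← hq1]
            rw [if_pos ht]
            rcases hI2 v i with h2 | ⟨h2a, h2b⟩ | ⟨h2a, h2b, h2c⟩
            · refine Or.inr (Or.inr ⟨by omega, ?_, Or.inr hvic⟩)
              rw [ht.1, ht.2]
              exact hq4
            · exfalso
              rw [hvic] at h2b
              exact hn'_nvis h2b
            · exfalso
              rcases h2c with h2c | h2c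
              · rw [hvic] at h2c
                exact hn'_nvis h2c
              · rw [hvic] at h2c
                exact hn'_ncur h2c
          · rw [if_neg ht, add_zero]
            rcases hI2 v i with h2 | ⟨h2a, h2b⟩ | ⟨h2a, h2b, h2c⟩
            · exact Or.inl h2
            · exact Or.inr (Or.inl ⟨h2a, hsub _ h2b⟩)
            · refine Or.inr (Or.inr ⟨h2a, h2b, Or.inl ?_⟩)
              rcases h2c with h2c | h2c
              · exact hsub _ h2c
              · rw [h2c]
                exact hcur_mem
        · intro v i hC
          by_cases ht : v = cur.1 ∧ i = n'.2
          · rw [ht.2]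
            omega
          · rw [if_neg ht, add_zero] at hC
            exact hI3 v i hC
        · intro j
          exact (hI4 j).mono hsub
      · -- move forward
        have hjm := j.isLt
        rcases hdir with ⟨hd1, hd2, hd3⟩ | ⟨hd1, hd2, hd3⟩
        · -- traverse uu → vv
          have hcurj : cur = (S.uu j, (j : ℕ)) := by rw [← hd1, ← hp2]
          refine ih n' (vis ++ [cur]) (Function.update y j (y j + 1))
            (fun v i => C v i + (if v = S.uu j ∧ i = (j : ℕ) then 1 else 0))
            hchain' hnd' (by omega) hlast' ?_ ?_ ?_ ?_
          · intro v i hi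
            rw [S.hgt_update (k+1) y j 1 v i, hI1 v i hi, hd1, hd2, hp2, hq2]
            unfold MSetup.dvv
            have huv1 : ¬ (S.uu j = S.vv j) := S.huv j
            have huv2 : ¬ (S.vv j = S.uu j) := Ne.symm (S.huv j)
            by_cases hv1 : v = S.uu j <;> by_cases hv2 : v = S.vv j <;>
              simp only [hv1, hv2, huv1, huv2, eq_self_iff_true, true_and, false_and,
                if_true, if_false] <;>
              first
              | omega
              | (split_ifs <;> omega)
          · intro v i
            by_cases ht : v = S.uu j ∧ i = (j : ℕ)
            · have hvic : (v, i) = cur := by rw [ht.1, ht.2, hcurj]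
              rw [if_pos ht]
              rcases hI2 v i with h2 | ⟨h2a, h2b⟩ | ⟨h2a, h2b, h2c⟩
              · refine Or.inr (Or.inl ⟨by omega, ?_⟩)
                rw [hvic]
                exact hcur_mem
              · exfalso
                rw [hvic] at h2b
                exact hcur_nvis h2b
              · exact Or.inl (by omega)
            · rw [if_neg ht, add_zero]
              rcases hI2 v i with h2 | ⟨h2a, h2b⟩ | ⟨h2a, h2b, h2c⟩
              · exact Or.inl h2
              · exact Or.inr (Or.inl ⟨h2a, hsub _ h2b⟩)
              · refine Or.inr (Or.inr ⟨h2a, h2b, Or.inl ?_⟩)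
                rcases h2c with h2c | h2c
                · exact hsub _ h2c
                · rw [h2c]
                  exact hcur_mem
          · intro v i hC
            by_cases ht : v = S.uu j ∧ i = (j : ℕ)
            · rw [ht.2]
              omega
            · rw [if_neg ht, add_zero] at hC
              exact hI3 v i hC
          · intro j'
            by_cases hjj : j' = j
            · subst hjj
              have h4 := hI4 j'
              have hmem1 : (S.uu j', (j' : ℕ)) ∈ vis ++ [cur] := by
                rw [← hcurj]
                exact hcur_mem
              unfold YInv at h4 ⊢
              rw [Function.update_self]
              rcases h4 with h|h|h|h|h|h|h|h
              · exact Or.inr (Or.inl ⟨by omega, hd3, hmem1⟩)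
              · exfalso
                have := h.2.2
                rw [← hcurj] at this
                exact hcur_nvis this
              · refine Or.inr (Or.inr (Or.inr (Or.inr (Or.inr (Or.inl
                  ⟨by omega, by omega, hmem1, hsub _ h.2.2⟩)))))
              · exfalso
                omega
              · refine Or.inr (Or.inr (Or.inr (Or.inr (Or.inr (Or.inr (Or.inr
                  ⟨by omega, h.2.1, hmem1, hsub _ h.2.2⟩))))))
              · exfalso
                have := h.2.2.1
                rw [← hcurj] at this
                exact hcur_nvis this
              · exfalso
                omega
              · exfalso
                have := h.2.2.1
                rw [← hcurj] at this
                exact hcur_nvis this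
            · have h := (hI4 j').mono hsub
              unfold YInv at h ⊢
              rw [Function.update_of_ne hjj]
              exact h
        · -- traverse vv → uu
          have hcurj : cur = (S.vv j, (j : ℕ)) := by rw [← hd1, ← hp2]
          refine ih n' (vis ++ [cur]) (Function.update y j (y j + (-1)))
            (fun v i => C v i + (if v = S.vv j ∧ i = (j : ℕ) then 1 else 0))
            hchain' hnd' (by omega) hlast' ?_ ?_ ?_ ?_
          · intro v i hi
            rw [S.hgt_update (k+1) y j (-1) v i, hI1 v i hi, hd1, hd2, hp2, hq2]
            unfold MSetup.dvv
            have huv1 : ¬ (S.uu j = S.vv j) := S.huv j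
            have huv2 : ¬ (S.vv j = S.uu j) := Ne.symm (S.huv j)
            by_cases hv1 : v = S.uu j <;> by_cases hv2 : v = S.vv j <;>
              simp only [hv1, hv2, huv1, huv2, eq_self_iff_true, true_and, false_and,
                if_true, if_false] <;>
              first
              | omega
              | (split_ifs <;> omega)
          · intro v i
            by_cases ht : v = S.vv j ∧ i = (j : ℕ)
            · have hvic : (v, i) = cur := by rw [ht.1, ht.2, hcurj]
              rw [if_pos ht]
              rcases hI2 v i with h2 | ⟨h2a, h2b⟩ | ⟨h2a, h2b, h2c⟩
              · refine Or.inr (Or.inl ⟨by omega, ?_⟩)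
                rw [hvic]
                exact hcur_mem
              · exfalso
                rw [hvic] at h2b
                exact hcur_nvis h2b
              · exact Or.inl (by omega)
            · rw [if_neg ht, add_zero]
              rcases hI2 v i with h2 | ⟨h2a, h2b⟩ | ⟨h2a, h2b, h2c⟩
              · exact Or.inl h2
              · exact Or.inr (Or.inl ⟨h2a, hsub _ h2b⟩)
              · refine Or.inr (Or.inr ⟨h2a, h2b, Or.inl ?_⟩)
                rcases h2c with h2c | h2c
                · exact hsub _ h2c
                · rw [h2c]
                  exact hcur_mem
          · intro v i hC
            by_cases ht : v = S.vv j ∧ i = (j : ℕ)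
            · rw [ht.2]
              omega
            · rw [if_neg ht, add_zero] at hC
              exact hI3 v i hC
          · intro j'
            by_cases hjj : j' = j
            · subst hjj
              have h4 := hI4 j'
              have hmem1 : (S.vv j', (j' : ℕ)) ∈ vis ++ [cur] := by
                rw [← hcurj]
                exact hcur_mem
              unfold YInv at h4 ⊢
              rw [Function.update_self]
              rcases h4 with h|h|h|h|h|h|h|h
              · exact Or.inr (Or.inr (Or.inl ⟨by omega, hd3, hmem1⟩))
              · refine Or.inr (Or.inr (Or.inr (Or.inr (Or.inr (Or.inl
                  ⟨by omega, by omega, hsub _ h.2.2, hmem1⟩)))))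
              · exfalso
                have := h.2.2
                rw [← hcurj] at this
                exact hcur_nvis this
              · refine Or.inr (Or.inr (Or.inr (Or.inr (Or.inr (Or.inr (Or.inl
                  ⟨by omega, h.2.1, hmem1, hsub _ h.2.2⟩))))))
              · exfalso
                omega
              · exfalso
                have := h.2.2.2
                rw [← hcurj] at this
                exact hcur_nvis this
              · exfalso
                have := h.2.2.1
                rw [← hcurj] at this
                exact hcur_nvis this
              · exfalso
                omega
            · have h := (hI4 j').mono hsub
              unfold YInv at h ⊢
              rw [Function.update_of_ne hjj]
              exact h
      · -- move backward
        have hjm := j.isLt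
        rcases hdir with ⟨hd1, hd2, hd3⟩ | ⟨hd1, hd2, hd3⟩
        · -- cancel uu → vv
          have hcurj : cur = (S.vv j, (j : ℕ) + 1) := by rw [← hd1, ← hp2]
          have hn'j : n' = (S.uu j, (j : ℕ)) := by rw [← hd2, ← hq2]
          refine ih n' (vis ++ [cur]) (Function.update y j (y j + (-1)))
            (fun v i => C v i + (if v = S.uu j ∧ i = (j : ℕ) then -1 else 0))
            hchain' hnd' (by omega) hlast' ?_ ?_ ?_ ?_
          · intro v i hi
            rw [S.hgt_update (k+1) y j (-1) v i, hI1 v i hi, hd1, hd2, hp2, hq2]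
            unfold MSetup.dvv
            have huv1 : ¬ (S.uu j = S.vv j) := S.huv j
            have huv2 : ¬ (S.vv j = S.uu j) := Ne.symm (S.huv j)
            by_cases hv1 : v = S.uu j <;> by_cases hv2 : v = S.vv j <;>
              simp only [hv1, hv2, huv1, huv2, eq_self_iff_true, true_and, false_and,
                if_true, if_false] <;>
              first
              | omega
              | (split_ifs <;> omega)
          · intro v i
            by_cases ht : v = S.uu j ∧ i = (j : ℕ)
            · have hvic : (v, i) = n' := by rw [ht.1, ht.2, hn'j]
              rw [if_pos ht]
              rcases hI2 v i with h2 | ⟨h2a, h2b⟩ | ⟨h2a, h2b, h2c⟩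
              · refine Or.inr (Or.inr ⟨by omega, ?_, Or.inr hvic⟩)
                rw [ht.1, ht.2]
                exact conserv_uu hf j hd3
              · exfalso
                rw [hvic] at h2b
                exact hn'_nvis h2b
              · exfalso
                rcases h2c with h2c | h2c
                · rw [hvic] at h2c
                  exact hn'_nvis h2c
                · rw [hvic] at h2c
                  exact hn'_ncur h2c
            · rw [if_neg ht, add_zero]
              rcases hI2 v i with h2 | ⟨h2a, h2b⟩ | ⟨h2a, h2b, h2c⟩
              · exact Or.inl h2
              · exact Or.inr (Or.inl ⟨h2a, hsub _ h2b⟩)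
              · refine Or.inr (Or.inr ⟨h2a, h2b, Or.inl ?_⟩)
                rcases h2c with h2c | h2c
                · exact hsub _ h2c
                · rw [h2c]
                  exact hcur_mem
          · intro v i hC
            by_cases ht : v = S.uu j ∧ i = (j : ℕ)
            · rw [ht.2]
              omega
            · rw [if_neg ht, add_zero] at hC
              exact hI3 v i hC
          · intro j'
            by_cases hjj : j' = j
            · subst hjj
              have h4 := hI4 j'
              have hmem1 : (S.vv j', (j' : ℕ) + 1) ∈ vis ++ [cur] := by
                rw [← hcurj]
                exact hcur_mem
              unfold YInv at h4 ⊢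
              rw [Function.update_self]
              rcases h4 with h|h|h|h|h|h|h|h
              · exact Or.inr (Or.inr (Or.inr (Or.inl ⟨by omega, hd3, hmem1⟩)))
              · exfalso
                omega
              · refine Or.inr (Or.inr (Or.inr (Or.inr (Or.inr (Or.inr (Or.inl
                  ⟨by omega, hd3, hsub _ h.2.2, hmem1⟩))))))
              · exfalso
                have := h.2.2
                rw [← hcurj] at this
                exact hcur_nvis this
              · exfalso
                omega
              · exfalso
                omega
              · exfalso
                have := h.2.2.2
                rw [← hcurj] at this
                exact hcur_nvis this
              · exfalso
                omega
            · have h := (hI4 j').mono hsub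
              unfold YInv at h ⊢
              rw [Function.update_of_ne hjj]
              exact h
        · -- cancel vv → uu
          have hcurj : cur = (S.uu j, (j : ℕ) + 1) := by rw [← hd1, ← hp2]
          have hn'j : n' = (S.vv j, (j : ℕ)) := by rw [← hd2, ← hq2]
          refine ih n' (vis ++ [cur]) (Function.update y j (y j + 1))
            (fun v i => C v i + (if v = S.vv j ∧ i = (j : ℕ) then -1 else 0))
            hchain' hnd' (by omega) hlast' ?_ ?_ ?_ ?_
          · intro v i hi
            rw [S.hgt_update (k+1) y j 1 v i, hI1 v i hi, hd1, hd2, hp2, hq2]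
            unfold MSetup.dvv
            have huv1 : ¬ (S.uu j = S.vv j) := S.huv j
            have huv2 : ¬ (S.vv j = S.uu j) := Ne.symm (S.huv j)
            by_cases hv1 : v = S.uu j <;> by_cases hv2 : v = S.vv j <;>
              simp only [hv1, hv2, huv1, huv2, eq_self_iff_true, true_and, false_and,
                if_true, if_false] <;>
              first
              | omega
              | (split_ifs <;> omega)
          · intro v i
            by_cases ht : v = S.vv j ∧ i = (j : ℕ)
            · have hvic : (v, i) = n' := by rw [ht.1, ht.2, hn'j]
              rw [if_pos ht]
              rcases hI2 v i with h2 | ⟨h2a, h2b⟩ | ⟨h2a, h2b, h2c⟩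
              · refine Or.inr (Or.inr ⟨by omega, ?_, Or.inr hvic⟩)
                rw [ht.1, ht.2]
                exact conserv_vv hf j hd3
              · exfalso
                rw [hvic] at h2b
                exact hn'_nvis h2b
              · exfalso
                rcases h2c with h2c | h2c
                · rw [hvic] at h2c
                  exact hn'_nvis h2c
                · rw [hvic] at h2c
                  exact hn'_ncur h2c
            · rw [if_neg ht, add_zero]
              rcases hI2 v i with h2 | ⟨h2a, h2b⟩ | ⟨h2a, h2b, h2c⟩
              · exact Or.inl h2
              · exact Or.inr (Or.inl ⟨h2a, hsub _ h2b⟩)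
              · refine Or.inr (Or.inr ⟨h2a, h2b, Or.inl ?_⟩)
                rcases h2c with h2c | h2c
                · exact hsub _ h2c
                · rw [h2c]
                  exact hcur_mem
          · intro v i hC
            by_cases ht : v = S.vv j ∧ i = (j : ℕ)
            · rw [ht.2]
              omega
            · rw [if_neg ht, add_zero] at hC
              exact hI3 v i hC
          · intro j'
            by_cases hjj : j' = j
            · subst hjj
              have h4 := hI4 j'
              have hmem1 : (S.uu j', (j' : ℕ) + 1) ∈ vis ++ [cur] := by
                rw [← hcurj]
                exact hcur_mem
              unfold YInv at h4 ⊢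
              rw [Function.update_self]
              rcases h4 with h|h|h|h|h|h|h|h
              · exact Or.inr (Or.inr (Or.inr (Or.inr (Or.inl ⟨by omega, hd3, hmem1⟩))))
              · refine Or.inr (Or.inr (Or.inr (Or.inr (Or.inr (Or.inr (Or.inr
                  ⟨by omega, hd3, hsub _ h.2.2, hmem1⟩))))))
              · exfalso
                omega
              · exfalso
                omega
              · exfalso
                have := h.2.2
                rw [← hcurj] at this
                exact hcur_nvis this
              · exfalso
                omega
              · exfalso
                omega
              · exfalso
                have := h.2.2.2
                rw [← hcurj] at this
                exact hcur_nvis this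
            · have h := (hI4 j').mono hsub
              unfold YInv at h ⊢
              rw [Function.update_of_ne hjj]
              exact h

end AugMain
section Augment

variable {k : ℕ} {x : Fin S.m → ℤ}

lemma augment (hf : S.IsFlow k x)
    (hreach : Relation.ReflTransGen (Res S k x) (S.s, 0) (S.z, S.m)) :
    ∃ y, S.IsFlow (k + 1) y := by
  obtain ⟨l, hc, hlast, hnd⟩ := exists_nodup_chain hreach
  refine aug_main hf l (S.s, 0) [] x (fun _ _ => 0) hc (by simpa using hnd)
    (by simp) hlast ?_ ?_ ?_ ?_
  · intro v i hi
    rw [S.hgt_succ_src]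
    simp
  · intro v i
    exact Or.inl rfl
  · intro v i h
    exact absurd rfl h
  · intro j
    exact Or.inl rfl

/-- Reachability in the residual graph. -/
def Rp (S : MSetup G) (k : ℕ) (x : Fin S.m → ℤ) (v : G.V) (i : ℕ) : Prop :=
  Relation.ReflTransGen (Res S k x) (S.s, 0) (v, i)

lemma Rp_up (h : Rp S k x v i) (hi : i + 1 ≤ S.m) : Rp S k x v (i + 1) :=
  h.tail (Or.inl ⟨rfl, rfl, hi⟩)

lemma Rp_up_iter (h : Rp S k x v i) : ∀ i', i ≤ i' → i' ≤ S.m → Rp S k x v i' := by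
  intro i'
  induction i' with
  | zero =>
      intro h1 _
      have : i = 0 := by omega
      subst this
      exact h
  | succ i' ih =>
      intro h1 h2
      by_cases hii : i = i' + 1
      · subst hii
        exact h
      · exact Rp_up (ih (by omega) (by omega)) h2

lemma Rp_down (h : Rp S k x v (i + 1)) (hi : i + 1 ≤ S.m)
    (hh : 1 ≤ S.hgt k x v i) : Rp S k x v i :=
  h.tail (Or.inr (Or.inl ⟨rfl, rfl, hi, hh⟩))

lemma Rp_mv_fwd_uv (j : Fin S.m) (hx : x j ≤ 0) (h : Rp S k x (S.uu j) (j : ℕ)) :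
    Rp S k x (S.vv j) ((j : ℕ) + 1) :=
  h.tail (Or.inr (Or.inr (Or.inl ⟨j, rfl, rfl, Or.inl ⟨rfl, rfl, hx⟩⟩)))

lemma Rp_mv_fwd_vu (j : Fin S.m) (hx : 0 ≤ x j) (h : Rp S k x (S.vv j) (j : ℕ)) :
    Rp S k x (S.uu j) ((j : ℕ) + 1) :=
  h.tail (Or.inr (Or.inr (Or.inl ⟨j, rfl, rfl, Or.inr ⟨rfl, rfl, hx⟩⟩)))

lemma Rp_mv_bwd_vu (j : Fin S.m) (hx : x j = 1) (h : Rp S k x (S.vv j) ((j : ℕ) + 1)) :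
    Rp S k x (S.uu j) (j : ℕ) :=
  h.tail (Or.inr (Or.inr (Or.inr ⟨j, rfl, rfl, Or.inl ⟨rfl, rfl, hx⟩⟩)))

lemma Rp_mv_bwd_uv (j : Fin S.m) (hx : x j = -1) (h : Rp S k x (S.uu j) ((j : ℕ) + 1)) :
    Rp S k x (S.vv j) (j : ℕ) :=
  h.tail (Or.inr (Or.inr (Or.inr ⟨j, rfl, rfl, Or.inr ⟨rfl, rfl, hx⟩⟩)))

open Classical in
/-- The cut levels: levels whose move crosses the reachability boundary. -/
noncomputable def MCut (S : MSetup G) (k : ℕ) (x : Fin S.m → ℤ) : Finset (Fin S.m) :=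
  Finset.univ.filter (fun j =>
    (Rp S k x (S.uu j) (j : ℕ) ∧ ¬ Rp S k x (S.vv j) ((j : ℕ) + 1)) ∨
    (Rp S k x (S.vv j) (j : ℕ) ∧ ¬ Rp S k x (S.uu j) ((j : ℕ) + 1)))

open Classical in
/-- The potential: total flow sitting on reachable nodes after level `i`. -/
noncomputable def Phi (S : MSetup G) (k : ℕ) (x : Fin S.m → ℤ) (i : ℕ) : ℤ :=
  ∑ v ∈ Finset.univ, (if Rp S k x v i then S.hgt k x v i else 0)

lemma mem_MCut (j : Fin S.m) : j ∈ MCut S k x ↔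
    ((Rp S k x (S.uu j) (j : ℕ) ∧ ¬ Rp S k x (S.vv j) ((j : ℕ) + 1)) ∨
    (Rp S k x (S.vv j) (j : ℕ) ∧ ¬ Rp S k x (S.uu j) ((j : ℕ) + 1))) := by
  simp [MCut]

lemma Phi_zero : Phi S k x 0 = k := by
  classical
  unfold Phi
  have : ∀ v ∈ Finset.univ, (if Rp S k x v 0 then S.hgt k x v 0 else 0)
      = (if v = S.s then (k : ℤ) else 0) := by
    intro v _
    rw [S.hgt_zero]
    by_cases hv : v = S.s
    · subst hv
      have hr : Rp S k x S.s 0 := Relation.ReflTransGen.refl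
      rw [if_pos hr]
    · rw [if_neg hv]
      split_ifs <;> rfl
  rw [Finset.sum_congr rfl this, Finset.sum_ite_eq' Finset.univ S.s (fun _ => (k : ℤ))]
  simp

lemma Phi_last (hf : S.IsFlow k x)
    (hnr : ¬ Rp S k x S.z S.m) : Phi S k x S.m = 0 := by
  classical
  unfold Phi
  refine Finset.sum_eq_zero ?_
  intro v _
  rw [hf.2.2 v]
  by_cases hv : v = S.z
  · subst hv
    rw [if_neg hnr]
  · rw [if_neg hv]
    split_ifs <;> rfl

set_option maxHeartbeats 2000000 in
lemma Phi_step (hf : S.IsFlow k x) (i : ℕ) (hi : i < S.m) :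
    Phi S k x (i + 1) ≤ Phi S k x i -
      (if (⟨i, hi⟩ : Fin S.m) ∈ MCut S k x then 1 else 0) := by
  classical
  set j : Fin S.m := ⟨i, hi⟩ with hjdef
  have hji : (j : ℕ) = i := rfl
  -- single-step identities for the height function
  have hequ : S.hgt k x (S.uu j) (i + 1) = S.hgt k x (S.uu j) i - x j := by
    have h1 := hgt_level k x j (S.uu j)
    have h2 : S.dvv j (S.uu j) = -1 := by
      unfold MSetup.dvv
      simp [S.huv j]
    rw [h2] at h1
    rw [hji] at h1
    omega
  have heqv : S.hgt k x (S.vv j) (i + 1) = S.hgt k x (S.vv j) i + x j := by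
    have h1 := hgt_level k x j (S.vv j)
    have h2 : S.dvv j (S.vv j) = 1 := by
      unfold MSetup.dvv
      simp [Ne.symm (S.huv j)]
    rw [h2] at h1
    rw [hji] at h1
    omega
  have hconst : ∀ v, v ≠ S.uu j → v ≠ S.vv j →
      S.hgt k x v (i + 1) = S.hgt k x v i := by
    intro v hv1 hv2
    have h1 := hgt_level k x j v
    have h2 : S.dvv j v = 0 := by
      unfold MSetup.dvv
      simp [hv1, hv2]
    rw [h2] at h1
    rw [hji] at h1
    omega
  have hF1 : ∀ v, Rp S k x v i → Rp S k x v (i + 1) := fun v h => Rp_up h (by omega)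
  have hF2 : ∀ v, Rp S k x v (i + 1) → 1 ≤ S.hgt k x v i → Rp S k x v i :=
    fun v h hh => Rp_down h (by omega) hh
  -- off the two endpoints the summand does not change
  have hvanish : ∀ v, v ≠ S.uu j → v ≠ S.vv j →
      ((if Rp S k x v (i+1) then S.hgt k x v (i+1) else 0) -
       (if Rp S k x v i then S.hgt k x v i else 0)) = 0 := by
    intro v hv1 hv2
    rw [hconst v hv1 hv2]
    by_cases hA : Rp S k x v i
    · rw [if_pos hA, if_pos (hF1 v hA)]
      ring
    · rw [if_neg hA]
      by_cases hA' : Rp S k x v (i + 1)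
      · rw [if_pos hA']
        have hz : S.hgt k x v i = 0 := by
          have hnn := hf.2.1 v i (by omega)
          by_contra hne
          exact hA (hF2 v hA' (by omega))
        rw [hz]
        ring
      · rw [if_neg hA']
        ring
  have hdiff : Phi S k x (i + 1) - Phi S k x i =
      ((if Rp S k x (S.uu j) (i+1) then S.hgt k x (S.uu j) (i+1) else 0) -
       (if Rp S k x (S.uu j) i then S.hgt k x (S.uu j) i else 0)) +
      ((if Rp S k x (S.vv j) (i+1) then S.hgt k x (S.vv j) (i+1) else 0) -
       (if Rp S k x (S.vv j) i then S.hgt k x (S.vv j) i else 0)) := by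
    unfold Phi
    rw [← Finset.sum_sub_distrib]
    have hpair : ∑ v ∈ ({S.uu j, S.vv j} : Finset G.V),
        ((if Rp S k x v (i+1) then S.hgt k x v (i+1) else 0) -
         (if Rp S k x v i then S.hgt k x v i else 0)) =
        ((if Rp S k x (S.uu j) (i+1) then S.hgt k x (S.uu j) (i+1) else 0) -
         (if Rp S k x (S.uu j) i then S.hgt k x (S.uu j) i else 0)) +
        ((if Rp S k x (S.vv j) (i+1) then S.hgt k x (S.vv j) (i+1) else 0) -
         (if Rp S k x (S.vv j) i then S.hgt k x (S.vv j) i else 0)) :=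
      Finset.sum_pair (S.huv j)
    rw [← hpair]
    refine (Finset.sum_subset (Finset.subset_univ _) ?_).symm
    intro v _ hv
    simp only [Finset.mem_insert, Finset.mem_singleton] at hv
    push_neg at hv
    exact hvanish v hv.1 hv.2
  -- numeric facts
  have hnu := hf.2.1 (S.uu j) i (by omega)
  have hnv := hf.2.1 (S.vv j) i (by omega)
  have hnu' := hf.2.1 (S.uu j) (i+1) (by omega)
  have hnv' := hf.2.1 (S.vv j) (i+1) (by omega)
  have hzu : ¬ Rp S k x (S.uu j) i → Rp S k x (S.uu j) (i+1) →
      S.hgt k x (S.uu j) i = 0 := by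
    intro h1 h2
    by_contra hne
    exact h1 (hF2 _ h2 (by omega))
  have hzv : ¬ Rp S k x (S.vv j) i → Rp S k x (S.vv j) (i+1) →
      S.hgt k x (S.vv j) i = 0 := by
    intro h1 h2
    by_contra hne
    exact h1 (hF2 _ h2 (by omega))
  have hcut := mem_MCut (S := S) (k := k) (x := x) j
  rw [hji] at hcut
  have hMuv : x j ≤ 0 → Rp S k x (S.uu j) i → Rp S k x (S.vv j) (i + 1) := by
    intro hx h
    have := Rp_mv_fwd_uv (k := k) (x := x) j hx (by rwa [hji])
    rwa [hji] at this
  have hMvu : 0 ≤ x j → Rp S k x (S.vv j) i → Rp S k x (S.uu j) (i + 1) := by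
    intro hx h
    have := Rp_mv_fwd_vu (k := k) (x := x) j hx (by rwa [hji])
    rwa [hji] at this
  have hM3 : x j = 1 → Rp S k x (S.vv j) (i + 1) → Rp S k x (S.uu j) i := by
    intro hx h
    have := Rp_mv_bwd_vu (k := k) (x := x) j hx (by rwa [hji])
    rwa [hji] at this
  have hM4 : x j = -1 → Rp S k x (S.uu j) (i + 1) → Rp S k x (S.vv j) i := by
    intro hx h
    have := Rp_mv_bwd_uv (k := k) (x := x) j hx (by rwa [hji])
    rwa [hji] at this
  by_cases hc : j ∈ MCut S k x
  · rw [if_pos hc]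
    rw [hcut] at hc
    rcases hc with ⟨hA, hB'⟩ | ⟨hB, hA'⟩
    · have hB : ¬ Rp S k x (S.vv j) i := fun h => hB' (hF1 _ h)
      have hA' : Rp S k x (S.uu j) (i + 1) := hF1 _ hA
      have hx1 : x j = 1 := by
        rcases hf.1 j with hx | hx | hx
        · exact hx
        · exact absurd (hMuv (by omega) hA) hB'
        · exact absurd (hMuv (by omega) hA) hB'
      simp only [hA, hA', hB, hB', if_true, if_false] at hdiff
      omega
    · have hA : ¬ Rp S k x (S.uu j) i := fun h => hA' (hF1 _ h)
      have hxm : x j = -1 := by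
        rcases hf.1 j with hx | hx | hx
        · exact absurd (hMvu (by omega) hB) hA'
        · exact absurd (hMvu (by omega) hB) hA'
        · exact hx
      have hB' : Rp S k x (S.vv j) (i + 1) := hF1 _ hB
      simp only [hA, hA', hB, hB', if_true, if_false] at hdiff
      omega
  · rw [if_neg hc]
    rw [hcut] at hc
    push_neg at hc
    obtain ⟨hc1, hc2⟩ := hc
    by_cases hA : Rp S k x (S.uu j) i <;> by_cases hB : Rp S k x (S.vv j) i <;>
      by_cases hA' : Rp S k x (S.uu j) (i+1) <;>
      by_cases hB' : Rp S k x (S.vv j) (i+1) <;>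
      first
      | exact absurd (hF1 _ hA) hA'
      | exact absurd (hF1 _ hB) hB'
      | exact absurd (hc1 hA) hB'
      | exact absurd (hc2 hB) hA'
      | (simp only [hA, hB, hA', hB', if_true, if_false] at hdiff
         try have hzu' := hzu hA hA'
         try have hzv' := hzv hB hB'
         rcases hf.1 j with hx | hx | hx <;>
           first
           | exact absurd (hM3 hx hB') hA
           | exact absurd (hM4 hx hA') hB
           | omega)

end Augment
section CutCard

variable {k : ℕ} {x : Fin S.m → ℤ}

lemma MCut_card_le (hf : S.IsFlow k x) (hnr : ¬ Rp S k x S.z S.m) :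
    (MCut S k x).card ≤ k := by
  classical
  have hstep : ∀ i, i ≤ S.m → Phi S k x i ≤ (k : ℤ) -
      ((MCut S k x).filter (fun j : Fin S.m => (j : ℕ) < i)).card := by
    intro i
    induction i with
    | zero =>
        intro _
        rw [Phi_zero]
        have : (MCut S k x).filter (fun j : Fin S.m => (j : ℕ) < 0) = ∅ := by
          refine Finset.filter_false_of_mem ?_
          intro j _
          omega
        rw [this]
        simp
    | succ i ih =>
        intro hi
        have hi' : i < S.m := hi
        have h1 := Phi_step hf i hi'
        have h2 := ih (by omega)
        by_cases hmem : (⟨i, hi'⟩ : Fin S.m) ∈ MCut S k x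
        · have hfe : (MCut S k x).filter (fun j : Fin S.m => (j : ℕ) < i + 1) =
              insert ⟨i, hi'⟩ ((MCut S k x).filter (fun j : Fin S.m => (j : ℕ) < i)) := by
            ext f
            simp only [Finset.mem_filter, Finset.mem_insert]
            constructor
            · rintro ⟨hfc, hfi⟩
              by_cases hfe : (f : ℕ) = i
              · exact Or.inl (Fin.ext hfe)
              · exact Or.inr ⟨hfc, by omega⟩
            · rintro (rfl | ⟨hfc, hfi⟩)
              · exact ⟨hmem, Nat.lt_succ_self i⟩
              · exact ⟨hfc, by omega⟩
          rw [if_pos hmem] at h1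
          rw [hfe, Finset.card_insert_of_notMem (by simp)]
          push_cast
          omega
        · have hfe : (MCut S k x).filter (fun j : Fin S.m => (j : ℕ) < i + 1) =
              (MCut S k x).filter (fun j : Fin S.m => (j : ℕ) < i) := by
            ext f
            simp only [Finset.mem_filter]
            constructor
            · rintro ⟨hfc, hfi⟩
              refine ⟨hfc, ?_⟩
              by_cases hfe : (f : ℕ) = i
              · exact absurd hfc (by rw [show f = ⟨i, hi'⟩ from Fin.ext hfe]; exact hmem)
              · omega
            · rintro ⟨hfc, hfi⟩
              exact ⟨hfc, by omega⟩
          rw [if_neg hmem] at h1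
          rw [hfe]
          omega
  have hfin := hstep S.m le_rfl
  rw [Phi_last hf hnr] at hfin
  have hfull : (MCut S k x).filter (fun j : Fin S.m => (j : ℕ) < S.m) = MCut S k x := by
    refine Finset.filter_true_of_mem ?_
    intro j _
    exact j.isLt
  rw [hfull] at hfin
  omega

lemma flow_le_m (hf : S.IsFlow k x) : k ≤ S.m := by
  classical
  have h := hf.2.2 S.z
  rw [if_pos rfl] at h
  unfold MSetup.hgt at h
  rw [if_neg (fun hc => S.hsz hc.symm)] at h
  have hterm : ∀ j ∈ Finset.univ.filter (fun j : Fin S.m => (j : ℕ) < S.m),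
      x j * S.dvv j S.z ≤ 1 := by
    intro j _
    rcases hf.1 j with hx | hx | hx <;>
      · rw [hx]
        unfold MSetup.dvv
        split_ifs <;> omega
  have hsum := Finset.sum_le_card_nsmul _ _ 1 hterm
  rw [zero_add] at h
  rw [h] at hsum
  have hcard : (Finset.univ.filter (fun j : Fin S.m => (j : ℕ) < S.m)).card ≤ S.m := by
    calc (Finset.univ.filter (fun j : Fin S.m => (j : ℕ) < S.m)).card
        ≤ (Finset.univ : Finset (Fin S.m)).card := Finset.card_filter_le _ _
      _ = S.m := by simp
  simp only [nsmul_eq_mul, mul_one] at hsum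
  omega

lemma cut_crossing (hnr : ¬ Rp S k x S.z S.m) :
    ∀ (es : List (Fin S.m)) (vs : List G.V) (a : G.V) (i : ℕ),
      MWk S a vs es → es.Pairwise (· < ·) → (∀ j ∈ es, i ≤ (j : ℕ)) →
      Rp S k x a i → i ≤ S.m → ∃ j ∈ es, j ∈ MCut S k x := by
  intro es
  induction es with
  | nil =>
      intro vs a i hw _ _ hr hi
      cases hw with
      | nil => exact absurd (Rp_up_iter hr S.m hi le_rfl) hnr
  | cons j es' ih =>
      intro vs a i hw hp hge hr hi
      cases hw with
      | cons _ b _ vs' _ hj hw' =>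
          have hij : i ≤ (j : ℕ) := hge j (List.mem_cons_self)
          have hrj : Rp S k x a (j : ℕ) := Rp_up_iter hr (j : ℕ) hij (le_of_lt j.isLt)
          by_cases hb : Rp S k x b ((j : ℕ) + 1)
          · obtain ⟨j', hj'mem, hj'cut⟩ := ih vs' b ((j : ℕ) + 1) hw'
              ((List.pairwise_cons.mp hp).2)
              (fun f hf => by
                have := (List.pairwise_cons.mp hp).1 f hf
                simp only [Fin.lt_def] at this
                omega)
              hb j.isLt
            exact ⟨j', List.mem_cons_of_mem _ hj'mem, hj'cut⟩
          · have hsym : s(a, b) = s(S.uu j, S.vv j) := by rw [← hj, S.hends j]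
            rw [Sym2.eq_iff] at hsym
            refine ⟨j, List.mem_cons_self, (mem_MCut j).mpr ?_⟩
            rcases hsym with ⟨ha, hb'⟩ | ⟨ha, hb'⟩
            · exact Or.inl ⟨by rwa [← ha], by rwa [← hb']⟩
            · exact Or.inr ⟨by rwa [← ha], by rwa [← hb']⟩

end CutCard

section Assembly

lemma tpath_edges_ne_nil (P : TPath G S.lam S.s S.z) : P.edges ≠ [] := by
  intro he
  have hlen := P.len_eq
  rw [he] at hlen
  simp only [List.length_nil, zero_add] at hlen
  obtain ⟨w, hw⟩ := List.length_eq_one_iff.mp hlen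
  have h1 := P.head_eq
  have h2 := P.last_eq
  rw [hw] at h1 h2
  simp at h1 h2
  exact S.hsz (h1.symm.trans h2)

lemma family_le_cut (kk : ℕ) (f : Fin kk → TPath G S.lam S.s S.z)
    (hdisj : ∀ t t', t ≠ t' → SnapDisjoint (f t) (f t'))
    (T : Finset ℕ) (hcut : IsSnapCut G S.lam S.s S.z ↑T) : kk ≤ T.card := by
  classical
  have hex : ∀ t, ∃ e ∈ (f t).edges, S.lam e ∈ (↑T : Set ℕ) := fun t => hcut (f t)
  choose e he hT using hex
  have hinj : ∀ t t', S.lam (e t) = S.lam (e t') → t = t' := by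
    intro t t' heq
    by_contra hne
    have hd := hdisj t t' hne
    rw [SnapDisjoint, Set.eq_empty_iff_forall_notMem] at hd
    exact hd (S.lam (e t)) ⟨⟨e t, he t, rfl⟩, ⟨e t', he t', heq.symm⟩⟩
  have hle := Finset.card_le_card_of_injOn (s := Finset.univ) (t := T)
    (fun t => S.lam (e t)) (fun t _ => by simpa using hT t)
    (fun t _ t' _ h => hinj t t' h)
  simpa using hle

theorem msetup_main (S : MSetup G) : maxD G S.lam S.s S.z = minC G S.lam S.s S.z := by
  classical
  have hD0 : 0 ∈ {kk | ∃ f : Fin kk → TPath G S.lam S.s S.z,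
      ∀ i j, i ≠ j → SnapDisjoint (f i) (f j)} := ⟨Fin.elim0, fun i => i.elim0⟩
  have hDbdd : BddAbove {kk | ∃ f : Fin kk → TPath G S.lam S.s S.z,
      ∀ i j, i ≠ j → SnapDisjoint (f i) (f j)} := by
    refine ⟨Fintype.card G.E, ?_⟩
    rintro kk ⟨f, hf⟩
    have hne : ∀ t, (f t).edges ≠ [] := fun t => tpath_edges_ne_nil (f t)
    have hginj : Function.Injective (fun t => (f t).edges.head (hne t)) := by
      intro t t' heq
      by_contra hnet
      have hd := hf t t' hnet
      rw [SnapDisjoint, Set.eq_empty_iff_forall_notMem] at hd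
      refine hd (S.lam ((f t).edges.head (hne t)))
        ⟨⟨_, List.head_mem (hne t), rfl⟩, ⟨_, List.head_mem (hne t'), ?_⟩⟩
      simp only at heq
      rw [heq]
    have := Fintype.card_le_of_injective _ hginj
    simpa using this
  have hF0 : 0 ∈ {kk | ∃ y, S.IsFlow kk y} := ⟨fun _ => 0, S.isFlow_zero⟩
  have hFbdd : BddAbove {kk | ∃ y, S.IsFlow kk y} := by
    refine ⟨S.m, ?_⟩
    rintro kk ⟨y, hy⟩
    exact flow_le_m hy
  set K := sSup {kk | ∃ y, S.IsFlow kk y} with hKdef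
  obtain ⟨xK, hxK⟩ := Nat.sSup_mem ⟨0, hF0⟩ hFbdd
  have hnr : ¬ Rp S K xK S.z S.m := by
    intro hr
    obtain ⟨y, hy⟩ := augment hxK hr
    have hmem : K + 1 ∈ {kk | ∃ y, S.IsFlow kk y} := ⟨y, hy⟩
    have := le_csSup hFbdd hmem
    omega
  set T := (MCut S K xK).image (fun j => S.lam (S.edge j)) with hTdef
  have hTcard : T.card = (MCut S K xK).card :=
    Finset.card_image_of_injective _ (fun a b hab => S.edge_inj (S.hinj hab))
  have hTcut : IsSnapCut G S.lam S.s S.z ↑T := by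
    intro P
    obtain ⟨es, hw, hp, hmap⟩ := tpathToMWk P
    obtain ⟨j, hjes, hjcut⟩ := cut_crossing hnr es P.verts S.s 0 hw hp
      (fun _ _ => Nat.zero_le _) Relation.ReflTransGen.refl (Nat.zero_le _)
    refine ⟨S.edge j, ?_, ?_⟩
    · rw [← hmap]
      exact List.mem_map_of_mem hjes
    · have hmemT : S.lam (S.edge j) ∈ T := by
        rw [hTdef]
        exact Finset.mem_image_of_mem _ hjcut
      exact Finset.mem_coe.mpr hmemT
  have hKD : K ∈ {kk | ∃ f : Fin kk → TPath G S.lam S.s S.z,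
      ∀ i j, i ≠ j → SnapDisjoint (f i) (f j)} := by
    obtain ⟨fam, hfam⟩ := flow_to_tpaths K xK hxK
    exact ⟨fam, hfam⟩
  have h1 : minC G S.lam S.s S.z ≤ T.card := Nat.sInf_le ⟨T, rfl, hTcut⟩
  have h2 : T.card ≤ K := by
    rw [hTcard]
    exact MCut_card_le hxK hnr
  have h3 : K ≤ maxD G S.lam S.s S.z := le_csSup hDbdd hKD
  have hCne : {h | ∃ T' : Finset ℕ, T'.card = h ∧ IsSnapCut G S.lam S.s S.z ↑T'}.Nonempty :=
    ⟨T.card, T, rfl, hTcut⟩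
  obtain ⟨T₀, hT₀c, hT₀cut⟩ := Nat.sInf_mem hCne
  have h4 : maxD G S.lam S.s S.z ≤ minC G S.lam S.s S.z := by
    refine csSup_le ⟨0, hD0⟩ ?_
    rintro kk ⟨f, hf⟩
    have := family_le_cut kk f hf T₀ hT₀cut
    rw [hT₀c] at this
    exact this
  have h5 : minC G S.lam S.s S.z ≤ maxD G S.lam S.s S.z := by omega
  omega

end Assembly
/-- if the timefunction is injective, then `maxD = minC` for every pair of
distinct vertices. -/
theorem stmt5 (G : Multigraph) (lam : G.E → ℕ) (hpos : ∀ e, 0 < lam e)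
    (hinj : Function.Injective lam) :
    ∀ s z : G.V, s ≠ z → maxD G lam s z = minC G lam s z := by
  classical
  intro s z hsz
  have hcard : (Finset.univ.image lam).card = Fintype.card G.E := by
    rw [Finset.card_image_of_injective _ hinj, Finset.card_univ]
  set T := Finset.univ.image lam with hTdef
  set iso := T.orderIsoOfFin hcard with hiso
  have hex : ∀ i : Fin (Fintype.card G.E), ∃ e : G.E, lam e = ((iso i : T) : ℕ) := by
    intro i
    have hmem : ((iso i : T) : ℕ) ∈ Finset.univ.image lam := (iso i).2
    obtain ⟨e, _, he⟩ := Finset.mem_image.mp hmem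
    exact ⟨e, he⟩
  choose edge hedge using hex
  have hexuv : ∀ i : Fin (Fintype.card G.E), ∃ a b, G.ends (edge i) = s(a, b) := by
    intro i
    exact Sym2.ind (f := fun zz => ∃ a b, zz = s(a, b))
      (fun a b => ⟨a, b, rfl⟩) (G.ends (edge i))
  choose uu vv huv using hexuv
  have hbij : Function.Bijective edge := by
    constructor
    · intro i i' he
      have : ((iso i : T) : ℕ) = ((iso i' : T) : ℕ) := by
        rw [← hedge i, ← hedge i', he]
      exact iso.injective (Subtype.ext this)
    · intro e
      have hmem : lam e ∈ T := by
        rw [hTdef]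
        exact Finset.mem_image_of_mem _ (Finset.mem_univ e)
      refine ⟨iso.symm ⟨lam e, hmem⟩, hinj ?_⟩
      rw [hedge (iso.symm ⟨lam e, hmem⟩), OrderIso.apply_symm_apply]
  have hmono : ∀ i j : Fin (Fintype.card G.E), i < j ↔ lam (edge i) < lam (edge j) := by
    intro i j
    rw [hedge i, hedge j]
    constructor
    · intro h
      exact Subtype.coe_lt_coe.mpr (iso.lt_iff_lt.mpr h)
    · intro h
      exact iso.lt_iff_lt.mp (Subtype.coe_lt_coe.mp h)
  exact msetup_main ⟨lam, s, z, hsz, hinj, Fintype.card G.E, edge, uu, vv, huv, hbij, hmono⟩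
end

section
/- Let (G,λ) be a temporal graph, let s,z be distinct vertices, and let e be an edge of G with endpoints s and z, with λ(e) = α. Let G′ be obtained from G by deleting every edge active at timestep α (i.e., removing λ⁻¹(α)) and let λ′ be the restriction of λ to E(G′). Then maxD(G,λ,s,z) = maxD(G′,λ′,s,z) + 1 and minC(G,λ,s,z) = minC(G′,λ′,s,z) + 1. -/
/-!
The one-edge path `s e z` is active only at `α`, so it is snapshot disjoint from every temporal
path avoiding `α`, and every snapshot cut contains `α`. The temporal paths of `G'` are exactly
those of `G` avoiding `α`. Hence a packing of `G'` plus `s e z` is a packing of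
`G`, while in a packing of `G` at most one path uses `α` and the others live in `G'`; dually,
a cut of `G'` plus `α` is a cut of `G`, and a cut of `G` minus `α` is a cut of `G'`.
-/

namespace TPath

variable {G : Multigraph} {lam : G.E → ℕ} {s z : G.V}

theorem edges_ne_nil (hsz : s ≠ z) (P : TPath G lam s z) : P.edges ≠ [] := by
  intro h
  obtain ⟨v, hv⟩ := List.length_eq_one_iff.mp (by simpa [h] using P.len_eq)
  have hs := P.head_eq
  have hz := P.last_eq
  simp only [hv, List.head?_cons, List.getLast?_singleton, Option.some.injEq] at hs hz
  exact hsz (hs.symm.trans hz)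

def single (hsz : s ≠ z) (e : G.E) (he : G.ends e = s(s, z)) : TPath G lam s z where
  verts := [s, z]
  edges := [e]
  len_eq := rfl
  head_eq := rfl
  last_eq := rfl
  nodup := by simp [hsz]
  ends_eq i h := by
    obtain rfl : i = 0 := by simpa using h
    simpa using he
  mono := List.isChain_singleton _

@[simp]
theorem times_single (hsz : s ≠ z) (e : G.E) (he : G.ends e = s(s, z)) :
    (single (lam := lam) hsz e he).times = {lam e} := by
  ext t
  simp [times, single, eq_comm]

variable {Q : G.E → Prop} [DecidablePred Q]

def lift (P : TPath (G.restrictE Q) (fun f => lam f.1) s z) : TPath G lam s z where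
  verts := P.verts
  edges := P.edges.map Subtype.val
  len_eq := P.len_eq.trans (congrArg (· + 1) (List.length_map _).symm)
  head_eq := P.head_eq
  last_eq := P.last_eq
  nodup := P.nodup
  ends_eq i h := by
    have h' : i < P.edges.length := h.trans_eq (List.length_map _)
    exact (congrArg G.ends (List.getElem_map _)).trans (P.ends_eq i h')
  mono := (congrArg (List.IsChain (· ≤ ·)) (List.map_map ..)).mpr P.mono

@[simp]
theorem times_lift (P : TPath (G.restrictE Q) (fun f => lam f.1) s z) :
    P.lift.times = P.times := by
  ext t
  constructor
  · rintro ⟨_, hg, rfl⟩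
    obtain ⟨f, hf, rfl⟩ := List.mem_map.mp hg
    exact ⟨f, hf, rfl⟩
  · rintro ⟨f, hf, rfl⟩
    exact ⟨f.1, List.mem_map_of_mem hf, rfl⟩

def restrict (P : TPath G lam s z) (hQ : ∀ f ∈ P.edges, Q f) :
    TPath (G.restrictE Q) (fun f => lam f.1) s z where
  verts := P.verts
  edges := P.edges.attachWith Q hQ
  len_eq := P.len_eq.trans (congrArg (· + 1) List.length_attachWith.symm)
  head_eq := P.head_eq
  last_eq := P.last_eq
  nodup := P.nodup
  ends_eq i h := by
    have h' : i < P.edges.length := h.trans_eq List.length_attachWith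
    exact (congrArg (fun f : {f // Q f} => G.ends f.1) (List.getElem_attachWith h)).trans
      (P.ends_eq i h')
  mono := (congrArg (List.IsChain (· ≤ ·)) (List.attachWith_map_val (f := lam) hQ)).mpr P.mono

@[simp]
theorem times_restrict (P : TPath G lam s z) (hQ : ∀ f ∈ P.edges, Q f) :
    (P.restrict hQ).times = P.times := by
  ext t
  constructor
  · rintro ⟨f, hf, rfl⟩
    exact ⟨f.1, (List.mem_attachWith hQ f).mp hf, rfl⟩
  · rintro ⟨f, hf, rfl⟩
    exact ⟨⟨f, hQ f hf⟩, (List.mem_attachWith hQ _).mpr hf, rfl⟩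

end TPath

section

variable {G : Multigraph} {lam : G.E → ℕ} {s z : G.V}

instance : Std.Symm (SnapDisjoint (G := G) (lam := lam) (s := s) (z := z)) :=
  ⟨fun _ _ h => by rwa [SnapDisjoint, Set.inter_comm]⟩

theorem isSnapCut_iff {S : Set ℕ} :
    IsSnapCut G lam s z S ↔ ∀ P : TPath G lam s z, (P.times ∩ S).Nonempty :=
  forall_congr' fun _ =>
    ⟨fun ⟨e, he, hS⟩ => ⟨_, ⟨e, he, rfl⟩, hS⟩, fun ⟨_, ⟨e, he, rfl⟩, hS⟩ => ⟨e, he, hS⟩⟩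

theorem bddAbove_snapDisjoint_families (hsz : s ≠ z) :
    BddAbove {k | ∃ f : Fin k → TPath G lam s z, ∀ i j, i ≠ j → SnapDisjoint (f i) (f j)} := by
  refine ⟨Fintype.card G.E, ?_⟩
  rintro k ⟨f, hf⟩
  let first i := (f i).edges.head ((f i).edges_ne_nil hsz)
  have hfirst : ∀ i, lam (first i) ∈ (f i).times := fun i => ⟨_, List.head_mem _, rfl⟩
  have hinj : Function.Injective first := fun i j hij => by
    by_contra hne
    exact (hf i j hne).subset ⟨hfirst i, hij ▸ hfirst j⟩
  simpa using Fintype.card_le_of_injective first hinj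

theorem le_maxD (hsz : s ≠ z) {k : ℕ} (f : Fin k → TPath G lam s z)
    (hf : Pairwise fun i j => SnapDisjoint (f i) (f j)) : k ≤ maxD G lam s z :=
  le_csSup (bddAbove_snapDisjoint_families hsz) ⟨f, hf⟩

theorem exists_snapDisjoint_family_maxD (hsz : s ≠ z) :
    ∃ f : Fin (maxD G lam s z) → TPath G lam s z, Pairwise fun i j => SnapDisjoint (f i) (f j) :=
  Nat.sSup_mem (by exact ⟨0, finZeroElim, finZeroElim⟩) (bddAbove_snapDisjoint_families hsz)

theorem maxD_le {n : ℕ} (h : ∀ k (f : Fin k → TPath G lam s z),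
    (Pairwise fun i j => SnapDisjoint (f i) (f j)) → k ≤ n) : maxD G lam s z ≤ n :=
  csSup_le (by exact ⟨0, finZeroElim, finZeroElim⟩) fun k ⟨f, hf⟩ => h k f hf

theorem minC_le {S : Finset ℕ} (hS : IsSnapCut G lam s z S) : minC G lam s z ≤ S.card :=
  Nat.sInf_le ⟨S, rfl, hS⟩

theorem exists_isSnapCut_card_eq_minC (hsz : s ≠ z) :
    ∃ S : Finset ℕ, S.card = minC G lam s z ∧ IsSnapCut G lam s z S := by
  have hcut : IsSnapCut G lam s z ↑(Finset.univ.image lam) := fun P =>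
    ⟨_, List.head_mem (P.edges_ne_nil hsz), by simp⟩
  exact Nat.sInf_mem (s := {h | ∃ S : Finset ℕ, S.card = h ∧ IsSnapCut G lam s z S})
    ⟨_, _, rfl, hcut⟩

end

theorem Pairwise.fin_cons {α : Type*} {r : α → α → Prop} [Std.Symm r] {n : ℕ} {a : α}
    {g : Fin n → α} (ha : ∀ i, r a (g i)) (hg : Pairwise fun i j => r (g i) (g j)) :
    Pairwise (Function.onFun r (Fin.cons a g : Fin (n + 1) → α)) := by
  intro i j hij
  cases i using Fin.cases <;> cases j using Fin.cases <;>
    simp only [Function.onFun, Fin.cons_zero, Fin.cons_succ]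
  · exact absurd rfl hij
  · exact ha _
  · exact Std.Symm.symm _ _ (ha _)
  · exact hg (ne_of_apply_ne Fin.succ hij)

section DeleteTimestep

variable {G : Multigraph} {lam : G.E → ℕ} {s z : G.V} {α : ℕ}

theorem TPath.notMem_times_lift
    (P : TPath (G.restrictE (fun f => lam f ≠ α)) (fun f => lam f.1) s z) :
    α ∉ P.lift.times := by
  rw [TPath.times_lift]
  rintro ⟨f, -, hf⟩
  exact f.2 hf

theorem TPath.forall_ne_of_notMem_times {P : TPath G lam s z} (h : α ∉ P.times) :
    ∀ f ∈ P.edges, lam f ≠ α :=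
  fun f hf hfα => h ⟨f, hf, hfα⟩

theorem le_maxD_restrictE {Q : G.E → Prop} [DecidablePred Q] (hsz : s ≠ z) {k : ℕ}
    (f : Fin k → TPath G lam s z) (hf : Pairwise fun i j => SnapDisjoint (f i) (f j))
    (hQ : ∀ i, ∀ g ∈ (f i).edges, Q g) : k ≤ maxD (G.restrictE Q) (fun g => lam g.1) s z :=
  le_maxD (G := G.restrictE Q) hsz (fun i => (f i).restrict (hQ i)) fun i j hij => by
    simpa [SnapDisjoint] using hf hij

theorem maxD_le_maxD_restrictE_add_one (hsz : s ≠ z) (α : ℕ) :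
    maxD G lam s z ≤ maxD (G.restrictE (fun f => lam f ≠ α)) (fun f => lam f.1) s z + 1 := by
  refine maxD_le fun k f hf => ?_
  by_cases h : ∃ i, α ∈ (f i).times
  · obtain ⟨i₀, hi₀⟩ := h
    obtain ⟨k, rfl⟩ := Nat.exists_eq_add_one_of_ne_zero i₀.pos.ne'
    have hrest : ∀ i, α ∉ (f (i₀.succAbove i)).times := fun i hi =>
      (hf (Fin.succAbove_ne i₀ i)).subset ⟨hi, hi₀⟩
    have := le_maxD_restrictE hsz (f ∘ i₀.succAbove)
      (hf.comp_of_injective Fin.succAbove_right_injective)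
      fun i => TPath.forall_ne_of_notMem_times (hrest i)
    omega
  · push Not at h
    have := le_maxD_restrictE hsz f hf fun i => TPath.forall_ne_of_notMem_times (h i)
    omega

theorem maxD_restrictE_add_one_le (hsz : s ≠ z) {e : G.E} (he : G.ends e = s(s, z)) :
    maxD (G.restrictE (fun f => lam f ≠ lam e)) (fun f => lam f.1) s z + 1 ≤ maxD G lam s z := by
  obtain ⟨f, hf⟩ := exists_snapDisjoint_family_maxD
    (G := G.restrictE (fun f => lam f ≠ lam e)) (lam := fun f => lam f.1) hsz
  have hsingle : ∀ i, SnapDisjoint (TPath.single hsz e he) (f i).lift := fun i => by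
    simpa [SnapDisjoint] using (f i).notMem_times_lift
  refine le_maxD hsz _ (Pairwise.fin_cons hsingle fun i j hij => ?_)
  simpa [SnapDisjoint] using hf hij

theorem IsSnapCut.mem_of_ends_eq {S : Set ℕ} (hS : IsSnapCut G lam s z S) (hsz : s ≠ z)
    {e : G.E} (he : G.ends e = s(s, z)) : lam e ∈ S := by
  simpa using isSnapCut_iff.mp hS (TPath.single hsz e he)

theorem IsSnapCut.insert_of_restrictE {S : Set ℕ}
    (hS : IsSnapCut (G.restrictE (fun f => lam f ≠ α)) (fun f => lam f.1) s z S) :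
    IsSnapCut G lam s z (insert α S) := by
  refine isSnapCut_iff.mpr fun P => ?_
  by_cases hα : α ∈ P.times
  · exact ⟨α, hα, Set.mem_insert _ _⟩
  · obtain ⟨t, ht, htS⟩ :=
      isSnapCut_iff.mp hS (P.restrict (TPath.forall_ne_of_notMem_times hα))
    exact ⟨t, by simpa using ht, Set.mem_insert_of_mem _ htS⟩

theorem IsSnapCut.diff_singleton_restrictE {S : Set ℕ} (hS : IsSnapCut G lam s z S) :
    IsSnapCut (G.restrictE (fun f => lam f ≠ α)) (fun f => lam f.1) s z (S \ {α}) := by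
  refine isSnapCut_iff.mpr fun P => ?_
  obtain ⟨t, ht, htS⟩ := isSnapCut_iff.mp hS P.lift
  exact ⟨t, by simpa using ht, htS, fun htα => P.notMem_times_lift (htα ▸ ht)⟩

theorem minC_le_minC_restrictE_add_one (hsz : s ≠ z) (α : ℕ) :
    minC G lam s z ≤ minC (G.restrictE (fun f => lam f ≠ α)) (fun f => lam f.1) s z + 1 := by
  obtain ⟨S, hS, hcut⟩ := exists_isSnapCut_card_eq_minC
    (G := G.restrictE (fun f => lam f ≠ α)) (lam := fun f => lam f.1) hsz
  have hcut' : IsSnapCut G lam s z ↑(insert α S) := by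
    simpa using hcut.insert_of_restrictE
  calc minC G lam s z ≤ (insert α S).card := minC_le hcut'
    _ ≤ S.card + 1 := Finset.card_insert_le _ _
    _ = _ := by rw [hS]

theorem minC_restrictE_add_one_le (hsz : s ≠ z) {e : G.E} (he : G.ends e = s(s, z)) :
    minC (G.restrictE (fun f => lam f ≠ lam e)) (fun f => lam f.1) s z + 1 ≤ minC G lam s z := by
  obtain ⟨S, hS, hcut⟩ := exists_isSnapCut_card_eq_minC (G := G) (lam := lam) hsz
  have hcut' : IsSnapCut (G.restrictE (fun f => lam f ≠ lam e)) (fun f => lam f.1) s z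
      ↑(S.erase (lam e)) := by
    simpa using hcut.diff_singleton_restrictE
  calc _ ≤ (S.erase (lam e)).card + 1 := Nat.add_le_add_right (minC_le hcut') 1
    _ = minC G lam s z := by rw [Finset.card_erase_add_one (hcut.mem_of_ends_eq hsz he), hS]

end DeleteTimestep

theorem stmt11_general (G : Multigraph) (lam : G.E → ℕ)
    (s z : G.V) (hsz : s ≠ z) (e : G.E) (he : G.ends e = s(s, z)) (α : ℕ)
    (hα : lam e = α) :
    maxD G lam s z
        = maxD (G.restrictE (fun f => lam f ≠ α)) (fun f => lam f.1) s z + 1 ∧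
    minC G lam s z
        = minC (G.restrictE (fun f => lam f ≠ α)) (fun f => lam f.1) s z + 1 := by
  subst hα
  exact ⟨(maxD_le_maxD_restrictE_add_one hsz _).antisymm (maxD_restrictE_add_one_le hsz he),
    (minC_le_minC_restrictE_add_one hsz _).antisymm (minC_restrictE_add_one_le hsz he)⟩

/-- if `e` is an edge between `s` and `z` active at timestep `α`, then
deleting all edges active at timestep `α` decreases both `maxD` and `minC` by exactly 1. -/
theorem stmt11 (G : Multigraph) (lam : G.E → ℕ) (hpos : ∀ e, 0 < lam e)
    (s z : G.V) (hsz : s ≠ z) (e : G.E) (he : G.ends e = s(s, z)) (α : ℕ)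
    (hα : lam e = α) :
    maxD G lam s z
        = maxD (G.restrictE (fun f => lam f ≠ α)) (fun f => lam f.1) s z + 1 ∧
    minC G lam s z
        = minC (G.restrictE (fun f => lam f ≠ α)) (fun f => lam f.1) s z + 1 :=
  stmt11_general G lam s z hsz e he α hα
end

section
/- Let H be a multigraph on vertex set {s,w,z} whose only multiedges are sw and wz, with arbitrary multiplicities (so the underlying simple graph of H is the path s–w–z). Then for every timefunction λ : E(H) → ℕ∖{0} in which no two parallel edges are active at the same timestep, maxD(H,λ,s,z) = minC(H,λ,s,z). -/
/-! Every temporal `s,z`-path in this graph is `s –a→ w –b→ z` with `a ≤ b`, where `a` is a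
timestep of the multiedge `sw` and `b` one of `wz`. So `maxD` is the largest set of pairs
`a ≤ b` using pairwise distinct timesteps, and every threshold `t` gives the snapshot cut
`{a < t} ∪ {b ≥ t}`. Sweeping the timesteps of `wz` upwards and matching each with the largest
still unused timestep of `sw` below it produces a family of pairs together with a threshold
whose cut is no larger than the family, so by weak duality both are optimal. -/

open Finset

def thresholdCut (A B : Finset ℕ) (t : ℕ) : Finset ℕ :=
  A.filter (· < t) ∪ B.filter (t ≤ ·)

/-- A pair `(a, b)` stands for the temporal path that leaves `s` at time `a` and enters `z` at
time `b`. -/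
def IsTimeMatching (A B : Finset ℕ) (M : Finset (ℕ × ℕ)) : Prop :=
  (∀ p ∈ M, p.1 ∈ A ∧ p.2 ∈ B ∧ p.1 ≤ p.2) ∧
    (M : Set (ℕ × ℕ)).Pairwise fun p q => Disjoint ({p.1, p.2} : Set ℕ) {q.1, q.2}

namespace thresholdCut

variable {A B : Finset ℕ} {a b t : ℕ}

theorem mem_or_mem (ha : a ∈ A) (hb : b ∈ B) (hab : a ≤ b) :
    a ∈ thresholdCut A B t ∨ b ∈ thresholdCut A B t := by
  rcases lt_or_ge a t with h | h
  · exact Or.inl (mem_union_left _ (mem_filter.2 ⟨ha, h⟩))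
  · exact Or.inr (mem_union_right _ (mem_filter.2 ⟨hb, h.trans hab⟩))

theorem eq_of_forall_notMem_Ico {t₁ t₂ : ℕ} (h : t₁ ≤ t₂)
    (hA : ∀ x ∈ A, x ∉ Set.Ico t₁ t₂) (hB : ∀ x ∈ B, x ∉ Set.Ico t₁ t₂) :
    thresholdCut A B t₁ = thresholdCut A B t₂ := by
  simp only [Set.mem_Ico, not_and, not_lt] at hA hB
  unfold thresholdCut
  congr 1
  · exact filter_congr fun x hx => by have := hA x hx; omega
  · exact filter_congr fun x hx => by have := hB x hx; omega

theorem insert_right_of_lt (h : b < t) :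
    thresholdCut A (insert b B) t = thresholdCut A B t := by
  rw [thresholdCut, filter_insert, if_neg (by omega), thresholdCut]

theorem card_insert_insert_le (h : ¬(a < t ∧ t ≤ b)) :
    #(thresholdCut (insert a A) (insert b B) t) ≤ #(thresholdCut A B t) + 1 := by
  unfold thresholdCut
  rw [filter_insert, filter_insert]
  split_ifs with h₁ h₂ h₂
  · omega
  · rw [insert_union]; exact card_insert_le _ _
  · rw [union_insert]; exact card_insert_le _ _
  · omega

theorem exists_card_insert_insert_le (hA : ∀ x ∈ A, x ≤ b → x ≤ a) (hB : ∀ x ∈ B, b < x)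
    (t : ℕ) : ∃ t', #(thresholdCut (insert a A) (insert b B) t') ≤ #(thresholdCut A B t) + 1 := by
  by_cases hat : a < t ∧ t ≤ b
  · -- No timestep of `A` or `B` lies in `[t, b]`, so the threshold can be moved past `b`.
    refine ⟨b + 1, ?_⟩
    rw [eq_of_forall_notMem_Ico (show t ≤ b + 1 by omega)
      (fun x hx ⟨hxt, hxb⟩ => by have := hA x hx (by omega); omega)
      (fun x hx ⟨hxt, hxb⟩ => by have := hB x hx; omega)]
    exact card_insert_insert_le (by omega)
  · exact ⟨t, card_insert_insert_le hat⟩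

end thresholdCut

namespace IsTimeMatching

variable {A B A' B' : Finset ℕ} {M : Finset (ℕ × ℕ)} {a b : ℕ}

theorem empty : IsTimeMatching A B ∅ := ⟨by simp, by simp⟩

theorem mono (hM : IsTimeMatching A B M) (hA : A ⊆ A') (hB : B ⊆ B') :
    IsTimeMatching A' B' M :=
  ⟨fun p hp => let ⟨h₁, h₂, h₃⟩ := hM.1 p hp; ⟨hA h₁, hB h₂, h₃⟩, hM.2⟩

theorem insert (hM : IsTimeMatching A B M) (hab : a ≤ b)
    (hdisj : ∀ p ∈ M, Disjoint ({a, b} : Set ℕ) {p.1, p.2}) :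
    IsTimeMatching (insert a A) (insert b B) (insert (a, b) M) := by
  refine ⟨fun p hp => ?_, ?_⟩
  · obtain rfl | hp := mem_insert.1 hp
    · exact ⟨mem_insert_self _ _, mem_insert_self _ _, hab⟩
    · exact (hM.mono (subset_insert _ _) (subset_insert _ _)).1 p hp
  · rw [coe_insert]
    exact hM.2.insert fun p hp _ => ⟨hdisj p hp, (hdisj p hp).symm⟩

end IsTimeMatching

theorem exists_isTimeMatching_card_thresholdCut_le (A B : Finset ℕ) :
    ∃ M, IsTimeMatching A B M ∧ ∃ t, #(thresholdCut A B t) ≤ #M := by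
  induction B using Finset.induction_on_min generalizing A with
  | empty => exact ⟨∅, .empty, 0, by simp [thresholdCut]⟩
  | insert b B hbB ih =>
    by_cases hpair : ∃ a ∈ A, a ≤ b
    · obtain ⟨a, ha, hmax⟩ := (A.filter (· ≤ b)).exists_max_image id <|
        let ⟨a₀, ha₀, ha₀b⟩ := hpair; ⟨a₀, mem_filter.2 ⟨ha₀, ha₀b⟩⟩
      obtain ⟨ha, hab⟩ := mem_filter.1 ha
      have hmax' : ∀ x ∈ A.erase a, x ≤ b → x ≤ a := fun x hx hxb =>
        hmax x (mem_filter.2 ⟨mem_of_mem_erase hx, hxb⟩)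
      obtain ⟨M, hM, t, ht⟩ := ih (A.erase a)
      have hdisj : ∀ p ∈ M, Disjoint ({a, b} : Set ℕ) {p.1, p.2} := by
        intro p hp
        obtain ⟨h₁, h₂, -⟩ := hM.1 p hp
        have hpa := ne_of_mem_erase h₁
        have hbp := hbB _ h₂
        have hpb : p.1 ≠ b := fun h => hpa (le_antisymm (hmax' _ h₁ h.le) (h ▸ hab))
        simp only [Set.disjoint_insert_left, Set.disjoint_singleton_left, Set.mem_insert_iff,
          Set.mem_singleton_iff]
        omega
      have hnotMem : (a, b) ∉ M := fun h => ne_of_mem_erase (hM.1 _ h).1 rfl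
      obtain ⟨t', ht'⟩ := thresholdCut.exists_card_insert_insert_le hmax' hbB t
      refine ⟨insert (a, b) M, insert_erase ha ▸ hM.insert hab hdisj, t', ?_⟩
      rw [← insert_erase ha, card_insert_of_notMem hnotMem]
      omega
    · push Not at hpair
      obtain ⟨M, hM, t, ht⟩ := ih A
      refine ⟨M, hM.mono subset_rfl (subset_insert _ _), max t (b + 1), ?_⟩
      rw [thresholdCut.insert_right_of_lt (by omega),
        ← thresholdCut.eq_of_forall_notMem_Ico (le_max_left _ _)
          (fun x hx ⟨hxt, hxb⟩ => by have := hpair x hx; omega)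
          (fun x hx ⟨hxt, hxb⟩ => by have := hbB x hx; omega)]
      exact ht

section

variable {G : Multigraph} {lam : G.E → ℕ} {s w z : G.V}

theorem card_le_of_isSnapCut {k : ℕ} {f : Fin k → TPath G lam s z}
    (hf : ∀ i j, i ≠ j → SnapDisjoint (f i) (f j)) {S : Finset ℕ}
    (hS : IsSnapCut G lam s z S) : k ≤ #S := by
  choose e he hS using fun i => hS (f i)
  have hinj : Function.Injective fun i => (⟨lam (e i), hS i⟩ : S) := by
    intro i j hij
    by_contra hne
    have hmem : lam (e i) ∈ (f i).times ∩ (f j).times :=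
      ⟨⟨e i, he i, rfl⟩, ⟨e j, he j, (congrArg Subtype.val hij).symm⟩⟩
    exact (hf i j hne ▸ hmem : lam (e i) ∈ (∅ : Set ℕ))
  simpa using Fintype.card_le_of_injective _ hinj

theorem maxD_eq_minC_of_card_le {k : ℕ} {f : Fin k → TPath G lam s z}
    (hf : ∀ i j, i ≠ j → SnapDisjoint (f i) (f j)) {S : Finset ℕ}
    (hS : IsSnapCut G lam s z S) (hSk : #S ≤ k) : maxD G lam s z = minC G lam s z := by
  have hk : #S = k := hSk.antisymm (card_le_of_isSnapCut hf hS)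
  have hmax : maxD G lam s z = k :=
    IsGreatest.csSup_eq ⟨⟨f, hf⟩, fun j ⟨g, hg⟩ => hk ▸ card_le_of_isSnapCut hg hS⟩
  have hmin : minC G lam s z = k :=
    IsLeast.csInf_eq ⟨⟨S, hk, hS⟩, fun _ ⟨_, hS', hcut⟩ => hS' ▸ card_le_of_isSnapCut hf hcut⟩
  rw [hmax, hmin]

def edgeTimes (G : Multigraph) (lam : G.E → ℕ) (u v : G.V) : Finset ℕ :=
  (univ.filter fun e => G.ends e = s(u, v)).image lam

theorem mem_edgeTimes {u v : G.V} {t : ℕ} :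
    t ∈ edgeTimes G lam u v ↔ ∃ e, G.ends e = s(u, v) ∧ lam e = t := by
  simp [edgeTimes]

def TPath.ofPair (hsw : s ≠ w) (hwz : w ≠ z) (hsz : s ≠ z) {e₁ e₂ : G.E}
    (h₁ : G.ends e₁ = s(s, w)) (h₂ : G.ends e₂ = s(w, z)) (hle : lam e₁ ≤ lam e₂) :
    TPath G lam s z where
  verts := [s, w, z]
  edges := [e₁, e₂]
  len_eq := rfl
  head_eq := rfl
  last_eq := rfl
  nodup := by simp [hsw, hwz, hsz]
  ends_eq i hi := by
    simp only [List.length_cons, List.length_nil] at hi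
    interval_cases i
    exacts [h₁, h₂]
  mono := List.isChain_pair.2 hle

theorem exists_tPath_times_eq (hsw : s ≠ w) (hwz : w ≠ z) (hsz : s ≠ z) {a b : ℕ}
    (ha : a ∈ edgeTimes G lam s w) (hb : b ∈ edgeTimes G lam w z) (hab : a ≤ b) :
    ∃ P : TPath G lam s z, P.times = {a, b} := by
  obtain ⟨e₁, h₁, rfl⟩ := mem_edgeTimes.1 ha
  obtain ⟨e₂, h₂, rfl⟩ := mem_edgeTimes.1 hb
  refine ⟨.ofPair hsw hwz hsz h₁ h₂ hab, ?_⟩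
  ext t
  simp [TPath.times, TPath.ofPair, eq_comm]

theorem TPath.exists_edges_eq_pair (hsw : s ≠ w) (hwz : w ≠ z) (hsz : s ≠ z)
    (hverts : ∀ u : G.V, u = s ∨ u = w ∨ u = z)
    (hedges : ∀ e : G.E, G.ends e = s(s, w) ∨ G.ends e = s(w, z)) (P : TPath G lam s z) :
    ∃ e₁ e₂, P.edges = [e₁, e₂] ∧ G.ends e₁ = s(s, w) ∧ G.ends e₂ = s(w, z) ∧
      lam e₁ ≤ lam e₂ := by
  obtain ⟨verts, edges, hlen, hhead, hlast, hnodup, hends, hmono⟩ := P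
  have hcard : verts.length ≤ 3 := by
    have hsub : (univ : Finset G.V) ⊆ {s, w, z} := fun u _ => by
      rcases hverts u with rfl | rfl | rfl <;> simp
    exact hnodup.length_le_card.trans ((card_le_card hsub).trans card_le_three)
  rcases edges with _ | ⟨e₁, _ | ⟨e₂, _ | ⟨e₃, edges⟩⟩⟩ <;>
    rcases verts with _ | ⟨a, _ | ⟨b, _ | ⟨c, _ | ⟨d, verts⟩⟩⟩⟩ <;>
    simp only [List.length_cons, List.length_nil] at hlen hcard <;> try omega
  · simp at hhead hlast
    exact absurd (hhead.symm.trans hlast) hsz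
  · simp only [List.head?_cons, List.getLast?_cons_cons, List.getLast?_singleton,
      Option.some.injEq] at hhead hlast
    subst a b
    have h₁ : G.ends e₁ = s(s, z) := hends 0 (by simp)
    rcases hedges e₁ with h | h <;> simp [h₁, hsw, hsz, hwz.symm] at h
  · simp only [List.head?_cons, List.getLast?_cons_cons, List.getLast?_singleton,
      Option.some.injEq] at hhead hlast
    subst a c
    have h₁ : G.ends e₁ = s(s, b) := hends 0 (by simp)
    have h₂ : G.ends e₂ = s(b, z) := hends 1 (by simp)
    obtain rfl : b = w := by
      rcases hedges e₁ with h | h <;> simp [h₁, hsw, hsz] at h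
      exact h
    exact ⟨e₁, e₂, rfl, h₁, h₂, List.isChain_pair.1 hmono⟩

theorem isSnapCut_thresholdCut (hsw : s ≠ w) (hwz : w ≠ z) (hsz : s ≠ z)
    (hverts : ∀ u : G.V, u = s ∨ u = w ∨ u = z)
    (hedges : ∀ e : G.E, G.ends e = s(s, w) ∨ G.ends e = s(w, z)) (t : ℕ) :
    IsSnapCut G lam s z (thresholdCut (edgeTimes G lam s w) (edgeTimes G lam w z) t) := by
  intro P
  obtain ⟨e₁, e₂, hP, h₁, h₂, hle⟩ := P.exists_edges_eq_pair hsw hwz hsz hverts hedges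
  rcases thresholdCut.mem_or_mem (mem_edgeTimes.2 ⟨e₁, h₁, rfl⟩)
    (mem_edgeTimes.2 ⟨e₂, h₂, rfl⟩) hle with h | h
  exacts [⟨e₁, by simp [hP], h⟩, ⟨e₂, by simp [hP], h⟩]

end

theorem stmt13_general (G : Multigraph) (s w z : G.V)
    (hsw : s ≠ w) (hwz : w ≠ z) (hsz : s ≠ z)
    (hverts : ∀ u : G.V, u = s ∨ u = w ∨ u = z)
    (hedges : ∀ e : G.E, G.ends e = s(s, w) ∨ G.ends e = s(w, z))
    (lam : G.E → ℕ) :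
    maxD G lam s z = minC G lam s z := by
  obtain ⟨M, ⟨hMmem, hMdisj⟩, t, ht⟩ :=
    exists_isTimeMatching_card_thresholdCut_le (edgeTimes G lam s w) (edgeTimes G lam w z)
  have hpath (p : M) : ∃ P : TPath G lam s z, P.times = {p.1.1, p.1.2} :=
    let ⟨ha, hb, hab⟩ := hMmem p p.2
    exists_tPath_times_eq hsw hwz hsz ha hb hab
  choose path hpath using hpath
  refine maxD_eq_minC_of_card_le (f := path ∘ M.equivFin.symm) ?_
    (isSnapCut_thresholdCut hsw hwz hsz hverts hedges t) (by simpa using ht)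
  intro i j hij
  rw [SnapDisjoint, Function.comp_apply, Function.comp_apply, hpath, hpath,
    ← Set.disjoint_iff_inter_eq_empty]
  exact hMdisj (M.equivFin.symm i).2 (M.equivFin.symm j).2
    (Subtype.val_injective.ne (M.equivFin.symm.injective.ne hij))

/-- for a multigraph on vertex set `{s, w, z}` whose only multiedges are
`sw` and `wz` (arbitrary multiplicities), and any timefunction in which no two parallel
edges are active at the same timestep, `maxD = minC`. -/
theorem stmt13 (G : Multigraph) (s w z : G.V)
    (hsw : s ≠ w) (hwz : w ≠ z) (hsz : s ≠ z)
    (hverts : ∀ u : G.V, u = s ∨ u = w ∨ u = z)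
    (hedges : ∀ e : G.E, G.ends e = s(s, w) ∨ G.ends e = s(w, z))
    (lam : G.E → ℕ) (hlam : ProperTime G lam) :
    maxD G lam s z = minC G lam s z :=
  stmt13_general G s w z hsw hwz hsz hverts hedges lam
end

section
/- Let G be a multigraph whose underlying simple graph is a path with endpoints s and z, and suppose some multiedge of G has multiplicity 1. Then for every timefunction λ : E(G) → ℕ∖{0}, maxD(G,λ,s,z) = minC(G,λ,s,z). -/
/-!
Along a path multigraph a temporal `s,z`-path must visit the vertices in order and so cross
every multiedge. A multiedge of multiplicity one is a single edge `e` used by every temporal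
`s,z`-path: then `{λ e}` is a snapshot cut and no two temporal paths are snapshot disjoint,
so both quantities are `1`, or both `0` when there is no temporal path at all.
-/

namespace TPath

variable {G : Multigraph} {lam : G.E → ℕ} {s z : G.V}

lemma verts_getElem_zero (P : TPath G lam s z) (h : 0 < P.verts.length) : P.verts[0] = s := by
  simpa [List.head?_eq_getElem?, List.getElem?_eq_getElem h] using P.head_eq

lemma verts_getElem_length_sub_one (P : TPath G lam s z) (h : P.verts.length - 1 < P.verts.length) :
    P.verts[P.verts.length - 1] = z := by
  simpa [List.getLast?_eq_getElem?, List.getElem?_eq_getElem h] using P.last_eq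

lemma ends_edges_getElem (P : TPath G lam s z) (i : ℕ) (hi : i < P.edges.length) :
    G.ends P.edges[i] =
      s(P.verts[i]'(by have := P.len_eq; omega), P.verts[i + 1]'(by have := P.len_eq; omega)) :=
  P.ends_eq i hi

section PathGraph

variable {n : ℕ} {φ : G.simple →g SimpleGraph.pathGraph n}

/-- Stepping back along the path graph would revisit a vertex. -/
lemma val_map_verts_getElem (hφ : Function.Injective φ) (hs : (φ s : ℕ) = 0)
    (P : TPath G lam s z) (i : ℕ) (hi : i < P.verts.length) : (φ P.verts[i] : ℕ) = i := by
  induction i using Nat.strong_induction_on with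
  | _ i ih =>
  match i, hi, ih with
  | 0, hi, _ => rw [P.verts_getElem_zero hi, hs]
  | j + 1, hi, ih =>
    have hj : j < P.edges.length := by have := P.len_eq; omega
    have hprev : (φ P.verts[j] : ℕ) = j := ih j (by omega) (by omega)
    have hstep := SimpleGraph.pathGraph_adj.1 (φ.map_adj ⟨_, P.ends_edges_getElem j hj⟩)
    rcases hstep with hfwd | hback
    · omega
    · have hj1 : 1 ≤ j := by omega
      have hrevisit : P.verts[j + 1] = P.verts[j - 1] :=
        hφ (Fin.ext (by rw [ih (j - 1) (by omega) (by omega)]; omega))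
      have := (P.nodup.getElem_inj_iff).1 hrevisit
      omega

lemma length_verts (hφ : Function.Injective φ) (hs : (φ s : ℕ) = 0)
    (hz : (φ z : ℕ) = n - 1) (P : TPath G lam s z) : P.verts.length = n := by
  have hlast := P.val_map_verts_getElem hφ hs (P.verts.length - 1) (by have := P.len_eq; omega)
  rw [P.verts_getElem_length_sub_one, hz] at hlast
  have := (φ z).isLt
  have := P.len_eq
  omega

lemma exists_mem_edges_ends_eq (hφ : Function.Injective φ) (hs : (φ s : ℕ) = 0)
    (hz : (φ z : ℕ) = n - 1) (P : TPath G lam s z) (e : G.E) :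
    ∃ f ∈ P.edges, G.ends f = G.ends e := by
  have hlen := P.length_verts hφ hs hz
  have hedges := P.len_eq
  have crossing : ∀ x y, G.ends e = s(x, y) → (φ x : ℕ) + 1 = φ y →
      ∃ f ∈ P.edges, G.ends f = G.ends e := by
    intro x y hxy hstep
    have hk : (φ x : ℕ) < P.edges.length := by have := (φ y).isLt; omega
    have hx : P.verts[(φ x : ℕ)] = x :=
      hφ (Fin.ext (P.val_map_verts_getElem hφ hs _ (by omega)))
    have hy : P.verts[(φ x : ℕ) + 1] = y :=
      hφ (Fin.ext (by rw [P.val_map_verts_getElem hφ hs _ (by omega), hstep]))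
    refine ⟨P.edges[(φ x : ℕ)], List.getElem_mem hk, ?_⟩
    rw [P.ends_edges_getElem _ hk, hxy]
    simp only [hx, hy]
  obtain ⟨x, y, hxy⟩ : ∃ x y, G.ends e = s(x, y) := Sym2.exists.1 ⟨_, rfl⟩
  rcases SimpleGraph.pathGraph_adj.1 (φ.map_adj (show G.simple.Adj x y from ⟨e, hxy⟩))
    with hfwd | hback
  · exact crossing x y hxy hfwd
  · exact crossing y x (by rw [hxy, Sym2.eq_swap]) hback

end PathGraph

end TPath

section Counting

variable {G : Multigraph} {lam : G.E → ℕ} {s z : G.V}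

lemma maxD_eq_zero_of_isEmpty [IsEmpty (TPath G lam s z)] : maxD G lam s z = 0 := by
  refine IsGreatest.csSup_eq ⟨⟨Fin.elim0, fun i => i.elim0⟩, ?_⟩
  rintro k ⟨f, -⟩
  by_contra hk
  exact IsEmpty.false (f ⟨0, by omega⟩)

lemma minC_eq_zero_of_isEmpty [IsEmpty (TPath G lam s z)] : minC G lam s z = 0 :=
  Nat.sInf_eq_zero.2 (Or.inl ⟨∅, Finset.card_empty, fun P => isEmptyElim P⟩)

lemma maxD_eq_one_of_forall_mem_times [Nonempty (TPath G lam s z)] {t : ℕ}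
    (ht : ∀ P : TPath G lam s z, t ∈ P.times) : maxD G lam s z = 1 := by
  refine IsGreatest.csSup_eq
    ⟨⟨fun _ => Classical.arbitrary _, fun i j hij => absurd (Subsingleton.elim i j) hij⟩, ?_⟩
  rintro k ⟨f, hf⟩
  by_contra! hk
  have hdisj := hf ⟨0, by omega⟩ ⟨1, hk⟩ (by simp [Fin.ext_iff])
  exact Set.eq_empty_iff_forall_notMem.1 hdisj t ⟨ht _, ht _⟩

lemma minC_eq_one_of_forall_mem_times [Nonempty (TPath G lam s z)] {t : ℕ}
    (ht : ∀ P : TPath G lam s z, t ∈ P.times) : minC G lam s z = 1 := by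
  refine IsLeast.csInf_eq ⟨⟨{t}, Finset.card_singleton t, fun P => ?_⟩, ?_⟩
  · obtain ⟨e, he, rfl⟩ := ht P
    exact ⟨e, he, Finset.mem_singleton_self _⟩
  · rintro k ⟨S, rfl, hcut⟩
    obtain ⟨e, -, heS⟩ := hcut (Classical.arbitrary _)
    exact Finset.card_pos.2 ⟨_, heS⟩

end Counting

/-- if the underlying simple graph of `G` is a path with endpoints `s` and
`z` and some multiedge of `G` has multiplicity 1, then `maxD = minC` for every
timefunction. -/
theorem stmt15 (G : Multigraph) (s z : G.V)
    (hpath : ∃ (n : ℕ) (hn : 2 ≤ n) (φ : G.simple ≃g SimpleGraph.pathGraph n),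
        φ s = ⟨0, by omega⟩ ∧ φ z = ⟨n - 1, by omega⟩)
    (hmult1 : ∃ e : G.E, ∀ f : G.E, G.ends f = G.ends e → f = e)
    (lam : G.E → ℕ) :
    maxD G lam s z = minC G lam s z := by
  obtain ⟨n, hn, φ, hs, hz⟩ := hpath
  obtain ⟨e, he⟩ := hmult1
  rcases isEmpty_or_nonempty (TPath G lam s z) with _ | _
  · rw [maxD_eq_zero_of_isEmpty, minC_eq_zero_of_isEmpty]
  · have hcommon : ∀ P : TPath G lam s z, lam e ∈ P.times := fun P => by
      obtain ⟨f, hf, hfe⟩ :=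
        P.exists_mem_edges_ends_eq (φ := φ.toHom) φ.injective (by simp [hs]) (by simp [hz]) e
      exact ⟨e, he f hfe ▸ hf, rfl⟩
    rw [maxD_eq_one_of_forall_mem_times hcommon, minC_eq_one_of_forall_mem_times hcommon]
end
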